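/- arXiv:2212.07064 — 15 statements merged into one kernel-verified Lean document; each statement's English description precedes it below -/
import Mathlib

section
/- Let (X,P_X) and (B,P_B) be preordered groups and φ an action of B on X by group automorphisms. For a positive cone P on the semidirect product X ⋊_φ B, the following are equivalent: (i) P is compatible; (ii) P_prod ⊆ P ⊆ P_lex, where P_prod = P_X × P_B is the product cone and P_lex = {(x,b) : b > 0, or (b ~ 0 and x ∈ P_X)} is the lexicographic cone. -/
namespace PreordGrp

/-- A positive cone on an additive group: a submonoid closed under conjugation.
It induces the preorder `x ≤ y ↔ -x + y ∈ P`. -/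
def IsCone {G : Type*} [AddGroup G] (P : Set G) : Prop :=
  (0 : G) ∈ P ∧ (∀ x ∈ P, ∀ y ∈ P, x + y ∈ P) ∧ ∀ x ∈ P, ∀ a : G, a + x - a ∈ P

/-- `x ≤ y` in the preorder induced by the cone `P`. -/
def coneLe {G : Type*} [AddGroup G] (P : Set G) (x y : G) : Prop := -x + y ∈ P

/-- `x ~ y` : both `x ≤ y` and `y ≤ x` in the preorder induced by `P`. -/
def coneSim {G : Type*} [AddGroup G] (P : Set G) (x y : G) : Prop :=
  coneLe P x y ∧ coneLe P y x

section SDP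

variable {X B : Type*} [AddGroup X] [AddGroup B]

/-- An action of `B` on `X` by group automorphisms:
`φ 0 = id` and `φ (b + b') = φ b ∘ φ b'`. -/
def IsAction (φ : B → X ≃+ X) : Prop :=
  (∀ x : X, φ 0 x = x) ∧ ∀ b b' : B, ∀ x : X, φ (b + b') x = φ b (φ b' x)

/-- Addition in the semidirect product `X ⋊_φ B`:
`(x, b) + (x', b') = (x + φ b x', b + b')`. -/
def sAdd (φ : B → X ≃+ X) (p q : X × B) : X × B := (p.1 + φ p.2 q.1, p.2 + q.2)

/-- Negation in the semidirect product `X ⋊_φ B`. -/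
def sNeg (φ : B → X ≃+ X) (p : X × B) : X × B := (-(φ (-p.2) p.1), -p.2)

/-- A positive cone on `X ⋊_φ B`: contains `0`, closed under addition and
under conjugation `p ↦ g + p - g`. -/
def IsSCone (φ : B → X ≃+ X) (P : Set (X × B)) : Prop :=
  ((0, 0) : X × B) ∈ P ∧ (∀ p ∈ P, ∀ q ∈ P, sAdd φ p q ∈ P) ∧
    ∀ p ∈ P, ∀ g : X × B, sAdd φ (sAdd φ g p) (sNeg φ g) ∈ P

/-- A compatible positive cone `P` on `X ⋊_φ B`:
(a) `(x, b) ∈ P → b ∈ PB`, (b) `(x, 0) ∈ P ↔ x ∈ PX`, (c) `b ∈ PB → (0, b) ∈ P`. -/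
def IsCompatible (φ : B → X ≃+ X) (PX : Set X) (PB : Set B) (P : Set (X × B)) : Prop :=
  IsSCone φ P ∧ (∀ x b, (x, b) ∈ P → b ∈ PB) ∧
    (∀ x : X, (x, (0 : B)) ∈ P ↔ x ∈ PX) ∧ ∀ b ∈ PB, ((0 : X), b) ∈ P

/-- The lexicographic cone: `(x, b)` with `b > 0`, or `b ~ 0` and `x ∈ PX`. -/
def lexCone (PX : Set X) (PB : Set B) : Set (X × B) :=
  {p | (p.2 ∈ PB ∧ -p.2 ∉ PB) ∨ (p.2 ∈ PB ∧ -p.2 ∈ PB ∧ p.1 ∈ PX)}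

/-- The smallest positive cone (conjugation-closed submonoid) of `X ⋊_φ B`
containing the product cone `PX ×ˢ PB`. -/
def genCone (φ : B → X ≃+ X) (PX : Set X) (PB : Set B) : Set (X × B) :=
  ⋂₀ {Q : Set (X × B) | IsSCone φ Q ∧ PX ×ˢ PB ⊆ Q}

end SDP

/-- a positive cone `P` on `X ⋊_φ B` is compatible iff
`P_prod ⊆ P ⊆ P_lex`. -/
theorem stmt0 {X B : Type*} [AddGroup X] [AddGroup B] (φ : B → X ≃+ X)
    (PX : Set X) (PB : Set B) (P : Set (X × B))
    (hPX : IsCone PX) (hPB : IsCone PB) (hφ : IsAction φ) (hP : IsSCone φ P) :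
    IsCompatible φ PX PB P ↔ PX ×ˢ PB ⊆ P ∧ P ⊆ lexCone PX PB := by
  constructor
  · rintro ⟨hS, ha, hb, hc⟩
    constructor
    · rintro ⟨x, b⟩ ⟨hx, hbB⟩
      have h1 : (x, (0 : B)) ∈ P := (hb x).2 hx
      have h2 := hc b hbB
      have h3 := hS.2.1 _ h1 _ h2
      simpa [sAdd] using h3
    · rintro ⟨x, b⟩ hxb
      have hbB := ha x b hxb
      by_cases hnb : -b ∈ PB
      · right
        refine ⟨hbB, hnb, ?_⟩
        have h2 := hc _ hnb
        have h3 := hS.2.1 _ hxb _ h2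
        have h4 : (x, (0 : B)) ∈ P := by simpa [sAdd] using h3
        exact (hb x).1 h4
      · exact Or.inl ⟨hbB, hnb⟩
  · rintro ⟨h1, h2⟩
    refine ⟨hP, ?_, ?_, ?_⟩
    · intro x b hxb
      rcases h2 hxb with ⟨h, _⟩ | ⟨h, _⟩ <;> exact h
    · intro x
      constructor
      · intro hx
        rcases h2 hx with ⟨_, hn⟩ | ⟨_, _, hxP⟩
        · exact absurd (by simpa using hPB.1) hn
        · exact hxP
      · intro hx
        exact h1 ⟨hx, hPB.1⟩
    · intro b hb
      exact h1 ⟨hPX.1, hb⟩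

end PreordGrp
end

section
/- Let (X,P_X) and (B,P_B) be preordered groups and φ an action of B on X by group automorphisms. The following conditions are equivalent: (i) there exists a compatible positive cone on X ⋊_φ B; (ii) for every b ∈ B, φ_b is monotone (i.e. φ_b(P_X) ⊆ P_X), and for every b ∈ B with b ~ 0 one has φ_b(x) ~ x for all x ∈ X; (iii) the lexicographic cone P_lex = {(x,b) : b > 0, or (b ~ 0 and x ∈ P_X)} is a compatible positive cone on X ⋊_φ B. -/
namespace PreordGrp

/-- existence of a compatible cone on `X ⋊_φ B` is equivalent to
each `φ b` being monotone and `φ b ~ id` pointwise whenever `b ~ 0`, and also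
equivalent to compatibility of the lexicographic cone. -/
theorem stmt1 {X B : Type*} [AddGroup X] [AddGroup B] (φ : B → X ≃+ X)
    (PX : Set X) (PB : Set B)
    (hPX : IsCone PX) (hPB : IsCone PB) (hφ : IsAction φ) :
    ((∃ P : Set (X × B), IsCompatible φ PX PB P) ↔
      ((∀ b : B, ∀ x ∈ PX, φ b x ∈ PX) ∧
        ∀ b : B, b ∈ PB → -b ∈ PB → ∀ x : X, coneSim PX (φ b x) x)) ∧
    (((∀ b : B, ∀ x ∈ PX, φ b x ∈ PX) ∧
        ∀ b : B, b ∈ PB → -b ∈ PB → ∀ x : X, coneSim PX (φ b x) x) ↔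
      IsCompatible φ PX PB (lexCone PX PB)) := by
  obtain ⟨hX0, hXadd, hXconj⟩ := hPX
  obtain ⟨hB0, hBadd, hBconj⟩ := hPB
  obtain ⟨hφ0, hφadd⟩ := hφ
  have hinv : ∀ (b : B) (x : X), φ b (φ (-b) x) = x := by
    intro b x; rw [← hφadd, add_neg_cancel, hφ0]
  -- conjugation helpers at the level of `B`
  have keyB : ∀ b c : B, b ∈ PB → c + b + -c ∈ PB := by
    intro b c h
    have := hBconj _ h c
    rwa [sub_eq_add_neg] at this
  have keyB' : ∀ b c : B, c + b + -c ∈ PB → b ∈ PB := by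
    intro b c h
    have := hBconj _ h (-c)
    rw [sub_eq_add_neg, neg_neg] at this
    have e : -c + (c + b + -c) + c = b := by
      rw [← add_assoc, ← add_assoc, neg_add_cancel, zero_add, add_assoc,
        neg_add_cancel, add_zero]
    rwa [e] at this
  have negconj : ∀ b c : B, -(c + b + -c) = c + -b + -c := by
    intro b c
    rw [neg_add_rev, neg_add_rev, neg_neg, add_assoc]
  -- helper at the level of `X`
  have keyX : ∀ x a : X, x ∈ PX → a + x + -a ∈ PX := by
    intro x a h
    have := hXconj _ h a
    rwa [sub_eq_add_neg] at this
  -- (i) → (ii)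
  have hAC : (∃ P : Set (X × B), IsCompatible φ PX PB P) →
      ((∀ b : B, ∀ x ∈ PX, φ b x ∈ PX) ∧
        ∀ b : B, b ∈ PB → -b ∈ PB → ∀ x : X, coneSim PX (φ b x) x) := by
    rintro ⟨P, ⟨⟨_h0, hadd, hconj⟩, _ha, hb, hc⟩⟩
    have hmono : ∀ b : B, ∀ x ∈ PX, φ b x ∈ PX := by
      intro b x hx
      have hxP : ((x, (0 : B)) : X × B) ∈ P := (hb x).mpr hx
      have h1 := hconj _ hxP ((0 : X), b)
      have heq : sAdd φ (sAdd φ ((0 : X), b) (x, 0)) (sNeg φ ((0 : X), b))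
          = (φ b x, (0 : B)) := by
        simp [sAdd, sNeg]
      rw [heq] at h1
      exact (hb _).mp h1
    refine ⟨hmono, ?_⟩
    intro b hbP hbN x
    have h1 : ((0 : X), b) ∈ P := hc b hbP
    have h2 : ((0 : X), -b) ∈ P := hc _ hbN
    -- conjugate (0, b) by (x, 0)
    have e1 : sAdd φ (sAdd φ (x, (0 : B)) ((0 : X), b)) (sNeg φ (x, (0 : B)))
        = (x + φ b (-x), b) := by
      simp [sAdd, sNeg, hφ0]
    have c1 : ((x + φ b (-x), b) : X × B) ∈ P := by
      rw [← e1]; exact hconj _ h1 _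
    have c1' : x + φ b (-x) ∈ PX := by
      have h3 := hadd _ c1 _ h2
      have e : sAdd φ (x + φ b (-x), b) ((0 : X), -b) = (x + φ b (-x), 0) := by
        simp [sAdd]
      rw [e] at h3
      exact (hb _).mp h3
    have e2 : sAdd φ (sAdd φ (x, (0 : B)) ((0 : X), -b)) (sNeg φ (x, (0 : B)))
        = (x + φ (-b) (-x), -b) := by
      simp [sAdd, sNeg, hφ0]
    have c2 : ((x + φ (-b) (-x), -b) : X × B) ∈ P := by
      rw [← e2]; exact hconj _ h2 _
    have c2' : x + φ (-b) (-x) ∈ PX := by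
      have h3 := hadd _ c2 _ h1
      have e : sAdd φ (x + φ (-b) (-x), -b) ((0 : X), b) = (x + φ (-b) (-x), 0) := by
        simp [sAdd]
      rw [e] at h3
      exact (hb _).mp h3
    constructor
    · -- `-(φ b x) + x ∈ PX`
      have h3 := keyX _ (-x) c1'
      have e : -x + (x + φ b (-x)) + -(-x) = -(φ b x) + x := by
        rw [(φ b).map_neg, neg_neg, ← add_assoc, neg_add_cancel, zero_add]
      rwa [e] at h3
    · -- `-x + φ b x ∈ PX`
      have h3 := keyX _ (-x) c2'
      have e : -x + (x + φ (-b) (-x)) + -(-x) = -(φ (-b) x) + x := by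
        rw [(φ (-b)).map_neg, neg_neg, ← add_assoc, neg_add_cancel, zero_add]
      rw [e] at h3
      have h4 := hmono b _ h3
      have e2 : φ b (-(φ (-b) x) + x) = -x + φ b x := by
        rw [map_add, map_neg, hinv]
      rwa [e2] at h4
  -- (ii) → (iii)
  have hCL : ((∀ b : B, ∀ x ∈ PX, φ b x ∈ PX) ∧
        ∀ b : B, b ∈ PB → -b ∈ PB → ∀ x : X, coneSim PX (φ b x) x) →
      IsCompatible φ PX PB (lexCone PX PB) := by
    rintro ⟨hmono, hsim⟩
    refine ⟨⟨?_, ?_, ?_⟩, ?_, ?_, ?_⟩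
    · -- (0,0) ∈ lexCone
      exact Or.inr ⟨hB0, by simpa using hB0, hX0⟩
    · -- closed under addition
      rintro ⟨x, b⟩ hp ⟨x', b'⟩ hq
      simp only [lexCone, Set.mem_setOf_eq, sAdd] at hp hq ⊢
      have hb1 : b ∈ PB := by rcases hp with ⟨h, _⟩ | ⟨h, _⟩ <;> exact h
      have hq1 : b' ∈ PB := by rcases hq with ⟨h, _⟩ | ⟨h, _⟩ <;> exact h
      have hsum : b + b' ∈ PB := hBadd _ hb1 _ hq1
      rcases hp with ⟨_, hb2⟩ | ⟨_, hb2, hx⟩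
      · -- b > 0
        left
        refine ⟨hsum, fun h => hb2 ?_⟩
        have h3 : b' + -(b + b') ∈ PB := hBadd _ hq1 _ h
        rwa [neg_add_rev, add_neg_cancel_left] at h3
      · rcases hq with ⟨_, hq2⟩ | ⟨_, hq2, hx'⟩
        · -- b' > 0
          left
          refine ⟨hsum, fun h => hq2 ?_⟩
          have h3 : -(b + b') + b ∈ PB := hBadd _ h _ hb1
          rwa [neg_add_rev, add_assoc, neg_add_cancel, add_zero] at h3
        · -- both ~ 0
          right
          refine ⟨hsum, ?_, ?_⟩
          · rw [neg_add_rev]; exact hBadd _ hq2 _ hb2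
          · exact hXadd _ hx _ (hmono b _ hx')
    · -- closed under conjugation
      rintro ⟨x, b⟩ hp ⟨y, c⟩
      have e : sAdd φ (sAdd φ (y, c) (x, b)) (sNeg φ (y, c))
          = (y + φ c x + -(φ (c + b + -c) y), c + b + -c) := by
        simp only [sAdd, sNeg, map_neg, ← hφadd]
      rw [e]
      simp only [lexCone, Set.mem_setOf_eq] at hp ⊢
      have hb1 : b ∈ PB := by rcases hp with ⟨h, _⟩ | ⟨h, _⟩ <;> exact h
      have hcb : c + b + -c ∈ PB := keyB _ _ hb1
      rcases hp with ⟨_, hb2⟩ | ⟨_, hb2, hx⟩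
      · -- b > 0 : conjugate is > 0
        left
        refine ⟨hcb, fun h => hb2 ?_⟩
        rw [negconj] at h
        exact keyB' _ _ h
      · -- b ~ 0
        right
        have hcbn : -(c + b + -c) ∈ PB := by
          rw [negconj]; exact keyB _ _ hb2
        refine ⟨hcb, hcbn, ?_⟩
        have hs := hsim (c + b + -c) hcb hcbn y
        -- hs.1 : -(φ (c+b+-c) y) + y ∈ PX
        have s1 : y + φ c x + -y ∈ PX := keyX _ y (hmono c _ hx)
        have s2 : y + (-(φ (c + b + -c) y) + y) + -y ∈ PX := keyX _ y hs.1
        have e2 : y + (-(φ (c + b + -c) y) + y) + -y = y + -(φ (c + b + -c) y) := by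
          rw [← add_assoc, add_assoc, add_neg_cancel, add_zero]
        rw [e2] at s2
        have h3 := hXadd _ s1 _ s2
        have e3 : y + φ c x + -y + (y + -(φ (c + b + -c) y))
            = y + φ c x + -(φ (c + b + -c) y) := by
          rw [← add_assoc, add_assoc (y + φ c x) (-y) y, neg_add_cancel, add_zero]
        rwa [e3] at h3
    · -- (a)
      rintro x b (⟨h, _⟩ | ⟨h, _⟩) <;> exact h
    · -- (b)
      intro x
      constructor
      · rintro (⟨_, h2⟩ | ⟨_, _, hx⟩)
        · exact absurd (by simpa using hB0) h2
        · exact hx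
      · intro hx
        exact Or.inr ⟨hB0, by simpa using hB0, hx⟩
    · -- (c)
      intro b hb
      by_cases h : -b ∈ PB
      · exact Or.inr ⟨hb, h, hX0⟩
      · exact Or.inl ⟨hb, h⟩
  constructor
  · exact ⟨hAC, fun h => ⟨_, hCL h⟩⟩
  · exact ⟨hCL, fun h => hAC ⟨_, h⟩⟩

end PreordGrp
end

section
/- Let (X,P_X) and (B,P_B) be preordered groups such that the preorder on B is antisymmetric (i.e. b ∈ P_B and -b ∈ P_B imply b = 0), and let φ be an action of B on X by group automorphisms. Then there exists a compatible positive cone on X ⋊_φ B if and only if φ_b is monotone (φ_b(P_X) ⊆ P_X) for every b ∈ B. -/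
namespace PreordGrp

/-- if the preorder on `B` is antisymmetric, then a compatible cone
on `X ⋊_φ B` exists iff every `φ b` is monotone. -/
theorem stmt2 {X B : Type*} [AddGroup X] [AddGroup B] (φ : B → X ≃+ X)
    (PX : Set X) (PB : Set B)
    (hPX : IsCone PX) (hPB : IsCone PB) (hφ : IsAction φ)
    (hanti : ∀ b : B, b ∈ PB → -b ∈ PB → b = 0) :
    (∃ P : Set (X × B), IsCompatible φ PX PB P) ↔
      ∀ b : B, ∀ x ∈ PX, φ b x ∈ PX := by
  obtain ⟨hX0, hXadd, hXconj⟩ := hPX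
  obtain ⟨hB0, hBadd, hBconj⟩ := hPB
  constructor
  · rintro ⟨P, ⟨hP0, hPadd, hPconj⟩, ha, hb, hc⟩ b x hx
    have h1 : (x, (0:B)) ∈ P := (hb x).2 hx
    have h2 := hPconj _ h1 ((0:X), b)
    have e : sAdd φ (sAdd φ ((0:X), b) (x, 0)) (sNeg φ ((0:X), b)) = (φ b x, 0) := by
      simp [sAdd, sNeg]
    rw [e] at h2
    exact (hb _).1 h2
  · intro hmono
    refine ⟨lexCone PX PB, ⟨?_, ?_, ?_⟩, ?_, ?_, ?_⟩
    · exact Or.inr ⟨hB0, by simpa using hB0, hX0⟩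
    · rintro ⟨x, b⟩ hp ⟨x', b'⟩ hq
      show (x + φ b x', b + b') ∈ lexCone PX PB
      have hbP : b ∈ PB := hp.elim (fun h => h.1) (fun h => h.1)
      have hb'P : b' ∈ PB := hq.elim (fun h => h.1) (fun h => h.1)
      have hsum : b + b' ∈ PB := hBadd _ hbP _ hb'P
      rcases hp with ⟨_, hbn⟩ | ⟨_, hbneg, hxP⟩
      · -- b strict
        refine Or.inl ⟨hsum, fun hn => hbn ?_⟩
        have : b' + -(b + b') ∈ PB := hBadd _ hb'P _ hn
        simpa [neg_add_rev, ← add_assoc] using this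
      · rcases hq with ⟨_, hb'n⟩ | ⟨_, hb'neg, hx'P⟩
        · -- b' strict
          refine Or.inl ⟨hsum, fun hn => hb'n ?_⟩
          have : -(b + b') + b ∈ PB := hBadd _ hn _ hbP
          simpa [neg_add_rev, add_assoc] using this
        · refine Or.inr ⟨hsum, ?_, ?_⟩
          · simpa [neg_add_rev] using hBadd _ hb'neg _ hbneg
          · exact hXadd _ hxP _ (hmono b x' hx'P)
    · rintro ⟨x, b⟩ hp ⟨a, c⟩
      have key : sAdd φ (sAdd φ (a, c) (x, b)) (sNeg φ (a, c)) =
          (a + φ c x + -(φ (c + b + -c) a), c + b + -c) := by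
        simp [sAdd, sNeg, ← hφ.2, add_assoc]
      rw [key]
      rcases hp with ⟨hbP, hbn⟩ | ⟨hbP, hbneg, hxP⟩
      · refine Or.inl ⟨by simpa [sub_eq_add_neg] using hBconj _ hbP c, fun hn => hbn ?_⟩
        have := hBconj _ hn (-c)
        simpa [neg_add_rev, sub_eq_add_neg, add_assoc] using this
      · have hb0 : b = 0 := hanti b hbP hbneg
        subst hb0
        have e2 : c + (0:B) + -c = 0 := by simp
        rw [e2]
        refine Or.inr ⟨hB0, by simpa using hB0, ?_⟩
        have := hXconj _ (hmono c x hxP) a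
        simpa [hφ.1, sub_eq_add_neg] using this
    · rintro x b (⟨h, _⟩ | ⟨h, _, _⟩) <;> exact h
    · intro x
      constructor
      · rintro (⟨_, hn⟩ | ⟨_, _, hxP⟩)
        · exact absurd (by simpa using hB0) hn
        · exact hxP
      · intro hx
        exact Or.inr ⟨hB0, by simpa using hB0, hx⟩
    · intro b hbP
      by_cases hn : -b ∈ PB
      · exact Or.inr ⟨hbP, hn, hX0⟩
      · exact Or.inl ⟨hbP, hn⟩

end PreordGrp
end

section
/- Let (X,P_X) and (B,P_B) be preordered groups and φ an action of B on X by group automorphisms. If 𝒮 is a nonempty family of compatible positive cones on X ⋊_φ B, then the intersection ⋂𝒮 is again a compatible positive cone. Consequently, if the set 𝒫 of compatible cones is nonempty, then 𝒫, ordered by inclusion, is a complete lattice whose top element is the lexicographic cone P_lex. -/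
namespace PreordGrp

section SDP

variable {X B : Type*} [AddGroup X] [AddGroup B]

section Aux

variable {X B : Type*} [AddGroup X] [AddGroup B] {φ : B → X ≃+ X}
variable {PX : Set X} {PB : Set B} {P : Set (X × B)}

lemma key1 (hP : IsCompatible φ PX PB P) (y : X) (c : B)
    (h : (y, c) ∈ P) (hc : -c ∈ PB) : y ∈ PX := by
  have h0 : ((0 : X), -c) ∈ P := hP.2.2.2 _ hc
  have := hP.1.2.1 _ h _ h0
  simp only [sAdd, map_zero, add_zero, add_neg_cancel] at this
  exact (hP.2.2.1 y).1 this

lemma key2 (hP : IsCompatible φ PX PB P) (x : X) (b : B)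
    (hx : x ∈ PX) (hb : b ∈ PB) : (x, b) ∈ P := by
  have h1 : (x, (0 : B)) ∈ P := (hP.2.2.1 x).2 hx
  have h2 : ((0 : X), b) ∈ P := hP.2.2.2 _ hb
  have := hP.1.2.1 _ h1 _ h2
  simpa only [sAdd, map_zero, add_zero, zero_add] using this

lemma keyconj (hPB : IsCone PB) (hP : IsCompatible φ PX PB P)
    (x : X) (b : B) (hx : x ∈ PX) (hb : b ∈ PB) (hnb : -b ∈ PB) (a : X) (c : B) :
    a + φ c x + φ (c + b) (-(φ (-c) a)) ∈ PX := by
  have hmem : (x, b) ∈ P := key2 hP x b hx hb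
  have hc := hP.1.2.2 _ hmem (a, c)
  have hneg : -(c + b + -c) ∈ PB := by
    have := hPB.2.2 _ hnb c
    rw [sub_eq_add_neg] at this
    have e : -(c + b + -c) = c + -b + -c := by
      simp [neg_add_rev, add_assoc]
    rwa [e]
  exact key1 hP _ _ hc hneg

/-- φ b maps `PX` into `PX` when `b ~ 0`, given some compatible cone. -/
lemma keyphi (hP : IsCompatible φ PX PB P) (x : X) (b : B)
    (hx : x ∈ PX) (hb : b ∈ PB) (hnb : -b ∈ PB) : φ b x ∈ PX := by
  have h1 : ((0 : X), b) ∈ P := hP.2.2.2 _ hb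
  have h2 : (x, (0 : B)) ∈ P := (hP.2.2.1 x).2 hx
  have := hP.1.2.1 _ h1 _ h2
  simp only [sAdd, zero_add, add_zero] at this
  exact key1 hP _ _ this hnb

lemma sub_lex (hP : IsCompatible φ PX PB P) : P ⊆ lexCone PX PB := by
  rintro ⟨x, b⟩ h
  have hb : b ∈ PB := hP.2.1 x b h
  by_cases hnb : -b ∈ PB
  · exact Or.inr ⟨hb, hnb, key1 hP x b h hnb⟩
  · exact Or.inl ⟨hb, hnb⟩

lemma lex_compat (hPX : IsCone PX) (hPB : IsCone PB) (hφ : IsAction φ)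
    (hP : IsCompatible φ PX PB P) : IsCompatible φ PX PB (lexCone PX PB) := by
  have conjPB : ∀ b ∈ PB, ∀ c : B, c + b + -c ∈ PB := by
    intro b hb c
    have := hPB.2.2 _ hb c; rwa [sub_eq_add_neg] at this
  refine ⟨⟨Or.inr ⟨hPB.1, by simpa using hPB.1, hPX.1⟩, ?_, ?_⟩, ?_, ?_, ?_⟩
  · -- addition
    rintro ⟨x, b⟩ hp ⟨x', b'⟩ hq
    have hb : b ∈ PB := hp.elim And.left And.left
    have hb' : b' ∈ PB := hq.elim And.left And.left
    rcases hp with ⟨_, hnb⟩ | ⟨_, hnb, hx⟩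
    · refine Or.inl ⟨hPB.2.1 _ hb _ hb', fun hcon => hnb ?_⟩
      have e : -b = b' + -(b + b') := by simp [neg_add_rev, ← add_assoc]
      rw [e]; exact hPB.2.1 _ hb' _ hcon
    · rcases hq with ⟨_, hnb'⟩ | ⟨_, hnb', hx'⟩
      · refine Or.inl ⟨hPB.2.1 _ hb _ hb', fun hcon => hnb' ?_⟩
        have e : -b' = -(b + b') + b := by simp [neg_add_rev, add_assoc]
        rw [e]; exact hPB.2.1 _ hcon _ hb
      · have h1 : -(b + b') ∈ PB := by
          have := hPB.2.1 _ hnb' _ hnb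
          simpa [neg_add_rev] using this
        exact Or.inr ⟨hPB.2.1 _ hb _ hb', h1,
          hPX.2.1 _ hx _ (keyphi hP x' b hx' hb hnb)⟩
  · -- conjugation
    rintro ⟨x, b⟩ hp ⟨a, c⟩
    show _ ∈ lexCone PX PB
    simp only [lexCone, sAdd, sNeg, Set.mem_setOf_eq]
    have hb : b ∈ PB := hp.elim And.left And.left
    rcases hp with ⟨_, hnb⟩ | ⟨_, hnb, hx⟩
    · refine Or.inl ⟨conjPB b hb c, fun hcon => hnb ?_⟩
      have e : -b = -c + -(c + b + -c) + c := by simp [neg_add_rev, add_assoc]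
      rw [e]
      have := conjPB _ hcon (-c)
      simpa [add_assoc] using this
    · refine Or.inr ⟨conjPB b hb c, ?_, ?_⟩
      · have := conjPB _ hnb c
        have e : -(c + b + -c) = c + -b + -c := by simp [neg_add_rev, add_assoc]
        rwa [e]
      · exact keyconj hPB hP x b hx hb hnb a c
  · rintro x b (⟨hb, _⟩ | ⟨hb, _⟩) <;> exact hb
  · intro x
    constructor
    · rintro (⟨_, hn0⟩ | ⟨_, _, hx⟩)
      · exact absurd (by simpa using hPB.1) hn0
      · exact hx
    · intro hx; exact Or.inr ⟨hPB.1, by simpa using hPB.1, hx⟩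
  · intro b hb
    by_cases hnb : -b ∈ PB
    · exact Or.inr ⟨hb, hnb, hPX.1⟩
    · exact Or.inl ⟨hb, hnb⟩

lemma inter_compat (S : Set (Set (X × B))) (hS : ∀ P ∈ S, IsCompatible φ PX PB P)
    (hne : S.Nonempty) : IsCompatible φ PX PB (⋂₀ S) := by
  obtain ⟨P0, hP0⟩ := hne
  refine ⟨⟨fun Q hQ => (hS Q hQ).1.1,
    fun p hp q hq Q hQ => (hS Q hQ).1.2.1 _ (hp Q hQ) _ (hq Q hQ),
    fun p hp g Q hQ => (hS Q hQ).1.2.2 _ (hp Q hQ) g⟩, ?_, ?_, ?_⟩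
  · intro x b h; exact (hS P0 hP0).2.1 x b (h P0 hP0)
  · intro x
    exact ⟨fun h => ((hS P0 hP0).2.2.1 x).1 (h P0 hP0),
      fun hx Q hQ => ((hS Q hQ).2.2.1 x).2 hx⟩
  · intro b hb Q hQ; exact (hS Q hQ).2.2.2 b hb

end Aux

end SDP

/-- the intersection of a nonempty family of compatible cones is a
compatible cone; consequently, if a compatible cone exists, the set of compatible
cones ordered by inclusion is a complete lattice with top element the
lexicographic cone (every subfamily has a greatest lower bound among the
compatible cones). -/
theorem stmt3 {X B : Type*} [AddGroup X] [AddGroup B] (φ : B → X ≃+ X)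
    (PX : Set X) (PB : Set B)
    (hPX : IsCone PX) (hPB : IsCone PB) (hφ : IsAction φ)
    (S : Set (Set (X × B))) (hS : ∀ P ∈ S, IsCompatible φ PX PB P)
    (hne : S.Nonempty) :
    IsCompatible φ PX PB (⋂₀ S) ∧
      ((∃ P : Set (X × B), IsCompatible φ PX PB P) →
        IsCompatible φ PX PB (lexCone PX PB) ∧
        (∀ P : Set (X × B), IsCompatible φ PX PB P → P ⊆ lexCone PX PB) ∧
        ∀ T : Set (Set (X × B)), (∀ P ∈ T, IsCompatible φ PX PB P) →
          ∃ Q : Set (X × B), IsCompatible φ PX PB Q ∧ (∀ P ∈ T, Q ⊆ P) ∧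
            ∀ Q' : Set (X × B), IsCompatible φ PX PB Q' →
              (∀ P ∈ T, Q' ⊆ P) → Q' ⊆ Q) := by
  refine ⟨inter_compat S hS hne, ?_⟩
  rintro ⟨P, hP⟩
  have hlex : IsCompatible φ PX PB (lexCone PX PB) := lex_compat hPX hPB hφ hP
  refine ⟨hlex, fun Q hQ => sub_lex hQ, ?_⟩
  intro T hT
  refine ⟨⋂₀ (insert (lexCone PX PB) T), ?_, ?_, ?_⟩
  · exact inter_compat _ (by rintro Q (rfl | hQ); exacts [hlex, hT Q hQ])
      ⟨_, Set.mem_insert _ _⟩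
  · intro R hR
    exact Set.sInter_subset_of_mem (Set.mem_insert_of_mem _ hR)
  · intro Q' hQ' hlb
    rintro p hp R (rfl | hR)
    · exact sub_lex hQ' hp
    · exact hlb R hR hp

end PreordGrp
end

section
/- Let (X,P_X) and (B,P_B) be preordered groups and φ an action of B on X by group automorphisms, and suppose that at least one compatible positive cone on X ⋊_φ B exists. Then the smallest submonoid of X ⋊_φ B that is closed under conjugation and contains P_X × P_B (the cone ⟨P_prod⟩ generated by the product cone) is itself a compatible cone, and it is contained in every compatible cone; i.e., it is the least compatible positive cone. -/
namespace PreordGrp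

/-- if some compatible cone on `X ⋊_φ B` exists, then the cone
generated by the product cone `PX ×ˢ PB` is compatible and is contained in
every compatible cone, i.e. it is the least compatible cone. -/
theorem stmt4 {X B : Type*} [AddGroup X] [AddGroup B] (φ : B → X ≃+ X)
    (PX : Set X) (PB : Set B)
    (hPX : IsCone PX) (hPB : IsCone PB) (hφ : IsAction φ)
    (h : ∃ P : Set (X × B), IsCompatible φ PX PB P) :
    IsCompatible φ PX PB (genCone φ PX PB) ∧
      ∀ P : Set (X × B), IsCompatible φ PX PB P → genCone φ PX PB ⊆ P := by
  -- every compatible cone contains the product cone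
  have hprod : ∀ P : Set (X × B), IsCompatible φ PX PB P → PX ×ˢ PB ⊆ P := by
    rintro P ⟨hS, _, hb, hc⟩ ⟨x, b⟩ ⟨hx, hbB⟩
    have h1 : (x, (0 : B)) ∈ P := (hb x).mpr hx
    have h2 : ((0 : X), b) ∈ P := hc b hbB
    have := hS.2.1 _ h1 _ h2
    simpa [sAdd] using this
  -- minimality
  have hmin : ∀ P : Set (X × B), IsCompatible φ PX PB P → genCone φ PX PB ⊆ P := by
    intro P hP p hp
    exact hp P ⟨hP.1, hprod P hP⟩
  -- genCone contains the product cone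
  have hsub : PX ×ˢ PB ⊆ genCone φ PX PB := by
    intro p hp Q hQ
    exact hQ.2 hp
  -- genCone is a scone
  have hscone : IsSCone φ (genCone φ PX PB) := by
    refine ⟨?_, ?_, ?_⟩
    · intro Q hQ; exact hQ.1.1
    · intro p hp q hq Q hQ; exact hQ.1.2.1 p (hp Q hQ) q (hq Q hQ)
    · intro p hp g Q hQ; exact hQ.1.2.2 p (hp Q hQ) g
  obtain ⟨P, hP⟩ := h
  refine ⟨⟨hscone, ?_, ?_, ?_⟩, hmin⟩
  · intro x b hxb
    exact hP.2.1 x b (hmin P hP hxb)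
  · intro x
    constructor
    · intro hx
      exact (hP.2.2.1 x).mp (hmin P hP hx)
    · intro hx
      exact hsub ⟨hx, hPB.1⟩
  · intro b hb
    exact hsub ⟨hPX.1, hb⟩

end PreordGrp
end

section
/- Let (X,P_X) and (B,P_B) be preordered groups and φ an action of B on X by group automorphisms, and suppose that at least one compatible positive cone on X ⋊_φ B exists. Then the product cone P_prod = P_X × P_B is itself a compatible cone (equivalently, the least compatible cone coincides with P_prod) if and only if φ_b(x) ~ x for every b ∈ P_B and every x ∈ X. -/
namespace PreordGrp

/-- if some compatible cone on `X ⋊_φ B` exists, then the product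
cone `PX ×ˢ PB` is itself compatible iff `φ b x ~ x` for every `b ∈ PB` and
every `x`. -/
theorem stmt5 {X B : Type*} [AddGroup X] [AddGroup B] (φ : B → X ≃+ X)
    (PX : Set X) (PB : Set B)
    (hPX : IsCone PX) (hPB : IsCone PB) (hφ : IsAction φ)
    (h : ∃ P : Set (X × B), IsCompatible φ PX PB P) :
    IsCompatible φ PX PB (PX ×ˢ PB) ↔
      ∀ b ∈ PB, ∀ x : X, coneSim PX (φ b x) x := by
  obtain ⟨P0, hP0cone, hP0a, hP0b, hP0c⟩ := h
  -- From the existence of a compatible cone, φ c preserves PX for every c : B.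
  have key : ∀ (c : B), ∀ x ∈ PX, φ c x ∈ PX := by
    intro c x hx
    have h1 : ((x, (0:B)) : X × B) ∈ P0 := (hP0b x).2 hx
    have h2 := hP0cone.2.2 _ h1 (((0 : X), c))
    simp only [sAdd, sNeg, map_zero, zero_add, add_zero, map_neg, neg_zero,
      add_neg_cancel] at h2
    exact (hP0b _).1 h2
  constructor
  · rintro ⟨hScone, -, -, -⟩ b hb x
    have aux : ∀ y : X, y - φ b y ∈ PX := by
      intro y
      have hp : ((0 : X), b) ∈ PX ×ˢ PB := ⟨hPX.1, hb⟩
      have h2 := hScone.2.2 _ hp ((y, (0 : B)))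
      simp only [sAdd, sNeg, hφ.1, map_zero, map_neg, neg_zero, add_zero,
        zero_add] at h2
      have := h2.1
      simpa [sub_eq_add_neg] using this
    constructor
    · -- -(φ b x) + x ∈ PX, conjugate of x - φ b x by -(φ b x)
      have hp := aux x
      have h2 := hPX.2.2 _ hp (-(φ b x))
      simpa [coneLe, sub_eq_add_neg, add_assoc] using h2
    · -- -x + φ b x ∈ PX, from aux (-x)
      have := aux (-x)
      simpa [coneLe, sub_eq_add_neg] using this
  · intro hs
    refine ⟨⟨⟨hPX.1, hPB.1⟩, ?_, ?_⟩, fun x b hxb => hxb.2,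
      fun x => ⟨fun hx => hx.1, fun hx => ⟨hx, hPB.1⟩⟩, fun b hb => ⟨hPX.1, hb⟩⟩
    · rintro ⟨x, b⟩ ⟨hx, hb⟩ ⟨x', b'⟩ ⟨hx', hb'⟩
      exact ⟨hPX.2.1 x hx _ (key b x' hx'), hPB.2.1 b hb b' hb'⟩
    · rintro ⟨x, b⟩ ⟨hx, hb⟩ ⟨y, c⟩
      simp only [sAdd, sNeg, map_neg]
      set d := c + b + -c with hd
      have hdPB : d ∈ PB := by
        have := hPB.2.2 b hb c
        simpa [sub_eq_add_neg] using this
      refine ⟨?_, hdPB⟩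
      have heq : φ (c + b) (φ (-c) y) = φ d y := by
        rw [hd, ← hφ.2]
      rw [heq]
      -- goal : y + φ c x + -(φ d y) ∈ PX
      have hy2 : y + -(φ d y) ∈ PX := by
        have h1 : -(φ d y) + y ∈ PX := (hs d hdPB y).1
        have h2 := hPX.2.2 _ h1 y
        simpa [sub_eq_add_neg, add_assoc] using h2
      have hx2 : y + φ c x + -y ∈ PX := by
        have := hPX.2.2 _ (key c x hx) y
        simpa [sub_eq_add_neg, add_assoc] using this
      have := hPX.2.1 _ hx2 _ hy2
      have heq2 : (y + φ c x + -y) + (y + -(φ d y)) = y + φ c x + -(φ d y) := by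
        simp [add_assoc]
      rwa [heq2] at this

end PreordGrp
end

section
/- Let (X,P_X) and (B,P_B) be preordered groups and φ an action of B on X by group automorphisms. A family (X_b)_{b∈B} of subsets of X determines a compatible positive cone P = {(x,b) : x ∈ X_b} on X ⋊_φ B if and only if: (1) X_b ≠ ∅ ⟺ b ∈ P_B ⟺ 0 ∈ X_b; (2) X_0 = P_X; (3) for all b, b' ∈ P_B, X_b + φ_b(X_{b'}) ⊆ X_{b+b'}; and (4) for all a ∈ B, b ∈ P_B and x ∈ X, x + φ_a(X_b) ⊆ X_{a+b-a} + φ_{a+b-a}(x). -/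
namespace PreordGrp

/-- a family `(X_b)_{b ∈ B}` of subsets of `X` determines a
compatible cone `P = {(x, b) | x ∈ X_b}` on `X ⋊_φ B` iff it satisfies
conditions (1)-(4). -/
theorem stmt6 {X B : Type*} [AddGroup X] [AddGroup B] (φ : B → X ≃+ X)
    (PX : Set X) (PB : Set B)
    (hPX : IsCone PX) (hPB : IsCone PB) (hφ : IsAction φ)
    (Xb : B → Set X) :
    IsCompatible φ PX PB {p : X × B | p.1 ∈ Xb p.2} ↔
      ((∀ b : B, ((Xb b).Nonempty ↔ b ∈ PB) ∧ (b ∈ PB ↔ (0 : X) ∈ Xb b)) ∧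
        Xb 0 = PX ∧
        (∀ b ∈ PB, ∀ b' ∈ PB, ∀ x ∈ Xb b, ∀ x' ∈ Xb b',
          x + φ b x' ∈ Xb (b + b')) ∧
        ∀ a : B, ∀ b ∈ PB, ∀ x : X, ∀ y ∈ Xb b,
          ∃ z ∈ Xb (a + b - a), x + φ a y = z + φ (a + b - a) x) := by
  obtain ⟨hφ0, hφadd⟩ := hφ
  have key : ∀ a b : B, ∀ x : X, φ (a + b) (-(φ (-a) x)) = -(φ (a + b - a) x) := by
    intro a b x
    rw [map_neg, ← hφadd, ← sub_eq_add_neg]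
  constructor
  · rintro ⟨⟨h0, hadd, hconj⟩, hb, hx0, h0b⟩
    refine ⟨fun b => ⟨⟨fun ⟨x, hx⟩ => hb x b hx, fun h => ⟨0, h0b b h⟩⟩,
      fun h => h0b b h, fun h => hb 0 b h⟩, Set.ext fun x => hx0 x, ?_, ?_⟩
    · intro b _ b' _ x hx x' hx'
      exact hadd (x, b) hx (x', b') hx'
    · intro a b _ x y hy
      have h := hconj (y, b) hy (x, a)
      simp only [sAdd, sNeg, Set.mem_setOf_eq, key] at h
      simp only [← sub_eq_add_neg] at h
      refine ⟨_, h, ?_⟩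
      rw [sub_add_cancel]
  · rintro ⟨h1, h2, h3, h4⟩
    have hne : ∀ x b, x ∈ Xb b → b ∈ PB := fun x b hx => (h1 b).1.mp ⟨x, hx⟩
    refine ⟨⟨?_, ?_, ?_⟩, fun x b hx => hne x b hx,
      fun x => by rw [Set.mem_setOf_eq]; simp [h2], fun b hb => ((h1 b).2.mp hb)⟩
    · show (0:X) ∈ Xb 0
      rw [h2]; exact hPX.1
    · rintro ⟨x, b⟩ hx ⟨x', b'⟩ hx'
      exact h3 b (hne x b hx) b' (hne x' b' hx') x hx x' hx'
    · rintro ⟨y, b⟩ hy ⟨x, a⟩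
      obtain ⟨z, hz, hzeq⟩ := h4 a b (hne y b hy) x y hy
      show x + φ a y + φ (a + b) (-(φ (-a) x)) ∈ Xb (a + b + -a)
      rw [key]
      simp only [← sub_eq_add_neg]
      rw [hzeq, add_sub_cancel_right]
      exact hz


end PreordGrp
end

section
/- Let (X,P_X) and (B,P_B) be preordered groups, φ an action of B on X by group automorphisms, and P a compatible positive cone on X ⋊_φ B. Then the point is a rali, i.e. the splitting s = ⟨0,1⟩ satisfies s∘π₂ ≤ id in the pointwise-on-positives order (explicitly: for every (x,b) ∈ P one has (x,b) - (0,b) ∈ P, equivalently x ∈ P_X), if and only if P equals the product cone P_X × P_B. -/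
namespace PreordGrp

/-- a compatible cone `P` on `X ⋊_φ B` makes the point a rali,
i.e. `(x, b) - (0, b) ∈ P` for every `(x, b) ∈ P`, iff `P` is the product cone. -/
theorem stmt8 {X B : Type*} [AddGroup X] [AddGroup B] (φ : B → X ≃+ X)
    (PX : Set X) (PB : Set B) (P : Set (X × B))
    (hPX : IsCone PX) (hPB : IsCone PB) (hφ : IsAction φ)
    (hP : IsCompatible φ PX PB P) :
    (∀ p ∈ P, sAdd φ p (sNeg φ ((0 : X), p.2)) ∈ P) ↔ P = PX ×ˢ PB := by
  obtain ⟨hcone, ha, hb, hc⟩ := hP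
  have key : ∀ p : X × B, sAdd φ p (sNeg φ ((0 : X), p.2)) = (p.1, 0) := by
    intro p
    simp [sAdd, sNeg]
  constructor
  · intro h
    ext ⟨x, b⟩
    constructor
    · intro hxb
      have h1 := h (x, b) hxb
      rw [key] at h1
      exact ⟨(hb x).mp h1, ha x b hxb⟩
    · rintro ⟨hx, hbb⟩
      have h1 : (x, (0 : B)) ∈ P := (hb x).mpr hx
      have h2 : ((0 : X), b) ∈ P := hc b hbb
      have := hcone.2.1 _ h1 _ h2
      simpa [sAdd] using this
  · intro h p hp
    rw [key]
    rw [h] at hp ⊢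
    exact ⟨hp.1, hPB.1⟩

end PreordGrp
end

section
/- Let X = ℤ with positive cone ℕ (the usual order), B = ℤ with positive cone all of ℤ (the codiscrete order), and let φ be the action of ℤ on ℤ given by φ_b(x) = (-1)^b · x. Then there exists no compatible positive cone on ℤ ⋊_φ ℤ. -/
namespace PreordGrp

/-- for `X = (ℤ, ℕ)`, `B = ℤ` with the codiscrete order, and the
action `φ b x = (-1)^b * x`, there is no compatible cone on `ℤ ⋊_φ ℤ`. -/
theorem stmt9 (φ : ℤ → ℤ ≃+ ℤ) (hφ : IsAction φ)
    (hdef : ∀ b x : ℤ, φ b x = (((-1 : ℤˣ) ^ b : ℤˣ) : ℤ) * x) :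
    ¬ ∃ P : Set (ℤ × ℤ),
        IsCompatible φ {x : ℤ | 0 ≤ x} (Set.univ : Set ℤ) P := by
  rintro ⟨P, ⟨h0, hadd, hconj⟩, ha, hb, hc⟩
  have h1 : ((1 : ℤ), (0 : ℤ)) ∈ P := (hb 1).2 (by norm_num)
  have hk := hconj _ h1 ((0 : ℤ), (1 : ℤ))
  have key : sAdd φ (sAdd φ ((0 : ℤ), (1 : ℤ)) (1, 0)) (sNeg φ (0, 1)) = (-1, 0) := by
    simp [sAdd, sNeg, hdef]
  rw [key] at hk
  have := (hb (-1)).1 hk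
  simp at this

end PreordGrp
end

section
/- Let φ be the action of ℤ on ℤ with φ_n(x) = (-1)^n · x, and consider X = ℤ with positive cone {0} and B = ℤ with positive cone ℕ. Let P be the smallest submonoid of ℤ ⋊_φ ℤ closed under conjugation containing {0} × ℕ (the minimal compatible cone). Then (2x, n) ∈ P for every x ∈ ℤ and every n ≥ 1. Consequently the set Q = {(x,n) : n ≥ 0 and (x, 2n) ∈ P} is a compatible positive cone on the direct product ℤ × ℤ (kernel (ℤ,{0}), quotient (ℤ,ℕ), trivial action, since φ_{2n} = id) containing (2,1), and hence Q strictly contains {0} × ℕ, which is the smallest conjugation-closed submonoid of ℤ × ℤ containing {0} × ℕ. Thus the pullback along n ↦ 2n of a point carrying the minimal compatible order does not carry the minimal compatible order: strong points are not stable under pullback. -/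
namespace PreordGrp

/-! In `ℤ ⋊ ℤ` with the sign action, conjugating the generator `(0, 1)` by `(x, 0)` gives
`(2x, 1)`, so the minimal cone is far larger than the product cone `{0} × ℕ`. It is still
compatible, being squeezed between the product cone and the cone
`{(x, n) | 0 ≤ n ∧ (n = 0 → x = 0)}`. Along `n ↦ 2n` the action becomes trivial and compatible
cones pull back to compatible cones, so the pullback is a compatible cone on the direct product
`ℤ × ℤ` containing `(2, 1)`; but in a direct product of abelian groups conjugation is trivial and
the minimal cone is the product cone itself. -/

theorem isCone_zero {G : Type*} [AddGroup G] : IsCone ({0} : Set G) :=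
  ⟨rfl, by simp, by simp⟩

theorem isCone_nonneg {B : Type*} [AddCommGroup B] [PartialOrder B] [IsOrderedAddMonoid B] :
    IsCone {b : B | 0 ≤ b} :=
  ⟨le_rfl, fun _ hx _ hy => add_nonneg hx hy, fun _ hx _ => by simpa using hx⟩

section SemidirectProduct

variable {X B : Type*} [AddGroup X] [AddGroup B] {φ : B → X ≃+ X} {PX : Set X} {PB : Set B}

theorem isSCone_genCone : IsSCone φ (genCone φ PX PB) :=
  ⟨Set.mem_sInter.2 fun _ hQ => hQ.1.1,
    fun _ hp _ hq => Set.mem_sInter.2 fun Q hQ =>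
      hQ.1.2.1 _ (Set.mem_sInter.1 hp Q hQ) _ (Set.mem_sInter.1 hq Q hQ),
    fun _ hp g => Set.mem_sInter.2 fun Q hQ => hQ.1.2.2 _ (Set.mem_sInter.1 hp Q hQ) g⟩

theorem prod_subset_genCone : PX ×ˢ PB ⊆ genCone φ PX PB :=
  fun _ hp => Set.mem_sInter.2 fun _ hQ => hQ.2 hp

theorem genCone_subset {Q : Set (X × B)} (hQ : IsSCone φ Q) (hsub : PX ×ˢ PB ⊆ Q) :
    genCone φ PX PB ⊆ Q :=
  Set.sInter_subset_of_mem ⟨hQ, hsub⟩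

theorem IsCompatible.prod_subset {P : Set (X × B)} (hP : IsCompatible φ PX PB P) :
    PX ×ˢ PB ⊆ P := by
  rintro ⟨x, b⟩ ⟨hx, hb⟩
  simpa [sAdd] using hP.1.2.1 _ ((hP.2.2.1 x).2 hx) _ (hP.2.2.2 b hb)

section Pullback

variable {B' : Type*} [AddGroup B'] {ψ : B' → X ≃+ X} {PB' : Set B'} {P : Set (X × B)}

/-- Along `f`, `(x, b) ↦ (x, f b)` is a homomorphism `X ⋊_ψ B' → X ⋊_φ B`, so cones pull back. -/
theorem IsSCone.comap (hP : IsSCone φ P) (f : B' →+ B) (hf : ∀ b x, φ (f b) x = ψ b x)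
    (hPB' : IsCone PB') : IsSCone ψ {p | p.2 ∈ PB' ∧ (p.1, f p.2) ∈ P} := by
  refine ⟨⟨hPB'.1, by simpa using hP.1⟩, ?_, ?_⟩
  · rintro p ⟨hp, hpP⟩ q ⟨hq, hqP⟩
    refine ⟨hPB'.2.1 _ hp _ hq, ?_⟩
    convert hP.2.1 _ hpP _ hqP using 1
    simp only [sAdd, ← hf, map_add]
  · rintro p ⟨hp, hpP⟩ g
    refine ⟨by simpa [sAdd, sNeg, sub_eq_add_neg] using hPB'.2.2 _ hp g.2, ?_⟩
    convert hP.2.2 _ hpP (g.1, f g.2) using 1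
    simp only [sAdd, sNeg, ← hf, map_add, map_neg]

theorem IsCompatible.comap (hP : IsCompatible φ PX PB P) (f : B' →+ B)
    (hf : ∀ b x, φ (f b) x = ψ b x) (hPB' : IsCone PB') (hfPB : ∀ b ∈ PB', f b ∈ PB) :
    IsCompatible ψ PX PB' {p | p.2 ∈ PB' ∧ (p.1, f p.2) ∈ P} := by
  refine ⟨hP.1.comap f hf hPB', fun _ _ h => h.1, fun x => ?_, fun b hb => ?_⟩
  · simpa [hPB'.1] using hP.2.2.1 x
  · exact ⟨hb, hP.2.2.2 _ (hfPB b hb)⟩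

end Pullback

end SemidirectProduct

section OrderedQuotient

variable {X B : Type*} [AddGroup X] [AddCommGroup B] [PartialOrder B] [IsOrderedAddMonoid B]
  {φ : B → X ≃+ X}

theorem isSCone_setOf_nonneg_snd_imp_fst_eq_zero (hφ : IsAction φ) :
    IsSCone φ {p : X × B | 0 ≤ p.2 ∧ (p.2 = 0 → p.1 = 0)} := by
  refine ⟨⟨le_rfl, fun _ => rfl⟩, ?_, ?_⟩
  · rintro ⟨x, b⟩ ⟨hb, hx⟩ ⟨y, c⟩ ⟨hc, hy⟩
    refine ⟨add_nonneg hb hc, fun hbc => ?_⟩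
    obtain ⟨rfl, rfl⟩ := (add_eq_zero_iff_of_nonneg hb hc).1 hbc
    obtain ⟨rfl, rfl⟩ : x = 0 ∧ y = 0 := ⟨hx rfl, hy rfl⟩
    simp [sAdd]
  · rintro ⟨x, b⟩ ⟨hb, hx⟩ ⟨y, c⟩
    refine ⟨by simpa [sAdd, sNeg] using hb, fun hb0 => ?_⟩
    obtain rfl : b = 0 := by simpa [sAdd, sNeg] using hb0
    obtain rfl := hx rfl
    simp [sAdd, sNeg, ← hφ.2, hφ.1]

theorem isCompatible_genCone_zero_nonneg (hφ : IsAction φ) :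
    IsCompatible φ {0} {b | 0 ≤ b} (genCone φ ({0} : Set X) {b : B | 0 ≤ b}) := by
  have hle : genCone φ ({0} : Set X) {b : B | 0 ≤ b} ⊆ {p | 0 ≤ p.2 ∧ (p.2 = 0 → p.1 = 0)} :=
    genCone_subset (isSCone_setOf_nonneg_snd_imp_fst_eq_zero hφ)
      fun _ ⟨hx, hb⟩ => ⟨hb, fun _ => hx⟩
  refine ⟨isSCone_genCone, fun _ _ h => (hle h).1, fun x => ⟨fun h => (hle h).2 rfl, ?_⟩,
    fun b hb => prod_subset_genCone ⟨rfl, hb⟩⟩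
  rintro rfl
  exact prod_subset_genCone ⟨rfl, le_rfl⟩

end OrderedQuotient

section DirectProduct

variable {X B : Type*} [AddCommGroup X] [AddCommGroup B]

theorem sAdd_sAdd_sNeg_refl (p g : X × B) :
    sAdd (fun _ => AddEquiv.refl X) (sAdd (fun _ => AddEquiv.refl X) g p)
      (sNeg (fun _ => AddEquiv.refl X) g) = p := by
  simp [sAdd, sNeg]

theorem genCone_refl {PX : Set X} {PB : Set B} (hPX : IsCone PX) (hPB : IsCone PB) :
    genCone (fun _ : B => AddEquiv.refl X) PX PB = PX ×ˢ PB := by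
  have hcone : IsSCone (fun _ : B => AddEquiv.refl X) (PX ×ˢ PB) :=
    ⟨⟨hPX.1, hPB.1⟩, fun _ hp _ hq => ⟨hPX.2.1 _ hp.1 _ hq.1, hPB.2.1 _ hp.2 _ hq.2⟩,
      fun p hp g => (sAdd_sAdd_sNeg_refl p g).symm ▸ hp⟩
  exact (genCone_subset hcone subset_rfl).antisymm prod_subset_genCone

end DirectProduct

section SignAction

variable {φ : ℤ → ℤ ≃+ ℤ}

theorem sign_action_two_mul (hφ : ∀ b x : ℤ, φ b x = (((-1 : ℤˣ) ^ b : ℤˣ) : ℤ) * x)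
    (n x : ℤ) : φ (2 * n) x = x := by
  simp [hφ, zpow_mul]

theorem two_mul_mem_genCone (hφ : ∀ b x : ℤ, φ b x = (((-1 : ℤˣ) ^ b : ℤˣ) : ℤ) * x)
    (x n : ℤ) (hn : 1 ≤ n) : (2 * x, n) ∈ genCone φ {0} {n : ℤ | 0 ≤ n} := by
  have hconj : sAdd φ (sAdd φ (x, 0) (0, 1)) (sNeg φ (x, 0)) = (2 * x, 1) := by
    simp [sAdd, sNeg, hφ, two_mul]
  have hP : IsSCone φ (genCone φ {0} {n : ℤ | 0 ≤ n}) := isSCone_genCone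
  have h21 : (2 * x, (1 : ℤ)) ∈ genCone φ {0} {n : ℤ | 0 ≤ n} :=
    hconj ▸ hP.2.2 (0, 1) (prod_subset_genCone ⟨rfl, Int.one_nonneg⟩) (x, 0)
  have h0n : ((0 : ℤ), n - 1) ∈ genCone φ {0} {n : ℤ | 0 ≤ n} :=
    prod_subset_genCone ⟨rfl, sub_nonneg.2 hn⟩
  simpa [sAdd] using hP.2.1 _ h21 _ h0n

end SignAction

/-- for the action `φ b x = (-1)^b * x` of `(ℤ, ℕ)` on `(ℤ, {0})`,
the minimal compatible cone `P` on `ℤ ⋊_φ ℤ` contains `(2x, n)` for all `x` and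
all `n ≥ 1`; hence its pullback `Q` along `n ↦ 2n` is a compatible cone on the
direct product `ℤ × ℤ` containing `(2, 1)`, strictly containing `{0} ×ˢ ℕ`,
which is the minimal compatible cone for the trivial action: strong points are
not stable under pullback. -/
theorem stmt10 (φ : ℤ → ℤ ≃+ ℤ) (hφ : IsAction φ)
    (hdef : ∀ b x : ℤ, φ b x = (((-1 : ℤˣ) ^ b : ℤˣ) : ℤ) * x)
    (P : Set (ℤ × ℤ)) (hPdef : P = genCone φ ({0} : Set ℤ) {n : ℤ | 0 ≤ n})
    (Q : Set (ℤ × ℤ))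
    (hQdef : Q = {p : ℤ × ℤ | 0 ≤ p.2 ∧ (p.1, 2 * p.2) ∈ P}) :
    (∀ x n : ℤ, 1 ≤ n → (2 * x, n) ∈ P) ∧
    IsCompatible (fun _ : ℤ => AddEquiv.refl ℤ) ({0} : Set ℤ) {n : ℤ | 0 ≤ n} Q ∧
    ((2, 1) : ℤ × ℤ) ∈ Q ∧
    genCone (fun _ : ℤ => AddEquiv.refl ℤ) ({0} : Set ℤ) {n : ℤ | 0 ≤ n}
      = ({0} : Set ℤ) ×ˢ {n : ℤ | 0 ≤ n} ∧
    ({0} : Set ℤ) ×ˢ {n : ℤ | 0 ≤ n} ⊂ Q := by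
  subst hPdef hQdef
  have hQ : IsCompatible (fun _ : ℤ => AddEquiv.refl ℤ) ({0} : Set ℤ) {n : ℤ | 0 ≤ n}
      {p : ℤ × ℤ | 0 ≤ p.2 ∧ (p.1, 2 * p.2) ∈ genCone φ {0} {n | 0 ≤ n}} :=
    (isCompatible_genCone_zero_nonneg hφ).comap (AddMonoidHom.mulLeft 2)
      (sign_action_two_mul hdef) isCone_nonneg fun b (hb : 0 ≤ b) => by simpa using hb
  have h21 : ((2, 1) : ℤ × ℤ) ∈
      {p : ℤ × ℤ | 0 ≤ p.2 ∧ (p.1, 2 * p.2) ∈ genCone φ {0} {n | 0 ≤ n}} :=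
    ⟨Int.one_nonneg, by simpa using two_mul_mem_genCone hdef 1 2 (by norm_num)⟩
  refine ⟨two_mul_mem_genCone hdef, hQ, h21, genCone_refl isCone_zero isCone_nonneg, ?_⟩
  exact (Set.ssubset_iff_of_subset hQ.prod_subset).2 ⟨_, h21, by simp⟩

end PreordGrp
end

section
/- Let (A,P_A) be a preordered group and g : A → ℤ a group homomorphism with g(P_A) ⊆ ℕ (i.e. monotone for the usual order on ℤ). Let ψ be the action of A on the additive group ℚ given by ψ_a(x) = 2^{g(a)} · x. Then the set Q = {(x,a) ∈ ℚ ⋊_ψ A : a ∈ P_A and (g(a) ≥ 1, or (g(a) = 0 and x ≥ 0))} — the pullback along g of the minimal (lexicographic) cone of ℚ ⋊_φ ℤ with φ_n(x) = 2^n x — equals the smallest submonoid of ℚ ⋊_ψ A closed under conjugation containing ℚ_{≥0} × P_A. In other words, every pullback of the point ℚ ⋊_φ ℤ with the minimal compatible order again carries the minimal compatible order: this point is stably strong. -/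
namespace PreordGrp

/-- for any preordered group `(A, PA)` and monotone homomorphism
`g : A → ℤ`, the pullback along `g` of the minimal (lexicographic) cone of
`ℚ ⋊_φ ℤ` (with `φ n x = 2^n x`) equals the minimal cone of `ℚ ⋊_ψ A`
(with `ψ a x = 2^(g a) * x`): the point is stably strong. -/
theorem stmt12 {A : Type*} [AddGroup A] (PA : Set A) (hPA : IsCone PA)
    (g : A →+ ℤ) (hg : ∀ a ∈ PA, 0 ≤ g a)
    (ψ : A → ℚ ≃+ ℚ) (hψact : IsAction ψ)
    (hψ : ∀ (a : A) (x : ℚ), ψ a x = 2 ^ (g a) * x) :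
    {p : ℚ × A | p.2 ∈ PA ∧ (1 ≤ g p.2 ∨ (g p.2 = 0 ∧ 0 ≤ p.1))}
      = genCone ψ {x : ℚ | 0 ≤ x} PA := by
  obtain ⟨hPA0, hPAadd, hPAconj⟩ := hPA
  have hsadd : ∀ (x x' : ℚ) (a a' : A),
      sAdd ψ (x, a) (x', a') = (x + ψ a x', a + a') := fun _ _ _ _ => rfl
  have hsneg : ∀ (x : ℚ) (a : A), sNeg ψ (x, a) = (-(ψ (-a) x), -a) := fun _ _ => rfl
  set Q : Set (ℚ × A) := {p : ℚ × A | p.2 ∈ PA ∧ (1 ≤ g p.2 ∨ (g p.2 = 0 ∧ 0 ≤ p.1))}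
    with hQdef
  have hQmem : ∀ (x : ℚ) (a : A),
      ((x, a) ∈ Q ↔ a ∈ PA ∧ (1 ≤ g a ∨ (g a = 0 ∧ 0 ≤ x))) := fun _ _ => Iff.rfl
  have hzpow_pos : ∀ n : ℤ, (0:ℚ) < 2 ^ n := fun n => zpow_pos (by norm_num) n
  have htwo : (2:ℚ) ≠ 0 := by norm_num
  have hQcone : IsSCone ψ Q := by
    refine ⟨⟨hPA0, Or.inr ⟨by simp, le_refl 0⟩⟩, ?_, ?_⟩
    · rintro ⟨x, a⟩ hp ⟨x', a'⟩ hq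
      rw [hQmem] at hp hq
      obtain ⟨ha, hca⟩ := hp
      obtain ⟨ha', hca'⟩ := hq
      rw [hsadd, hQmem, map_add]
      refine ⟨hPAadd a ha a' ha', ?_⟩
      have hga : 0 ≤ g a := hg a ha
      have hga' : 0 ≤ g a' := hg a' ha'
      rcases hca with h1 | ⟨h0, hx⟩
      · left; omega
      rcases hca' with h1 | ⟨h0', hx'⟩
      · left; omega
      · right
        refine ⟨by omega, ?_⟩
        rw [hψ, h0]
        norm_num
        linarith
    · rintro ⟨x, a⟩ hp ⟨y, b⟩
      rw [hQmem] at hp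
      obtain ⟨ha, hca⟩ := hp
      rw [hsadd, hsadd, hsneg]
      simp only [sAdd]
      rw [hQmem]
      constructor
      · have hcc := hPAconj a ha b
        rwa [sub_eq_add_neg] at hcc
      · simp only [map_add, map_neg, hψ]
        rcases hca with h1 | ⟨h0, hx⟩
        · left; omega
        · right
          refine ⟨by omega, ?_⟩
          rw [h0, add_zero]
          have he : (2:ℚ) ^ (g b) * (2 ^ (-g b) * y) = y := by
            rw [← mul_assoc, ← zpow_add₀ htwo]; simp
          rw [mul_neg, he]
          nlinarith [hzpow_pos (g b), hx]
  have hQsub : {x : ℚ | 0 ≤ x} ×ˢ PA ⊆ Q := by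
    rintro ⟨x, a⟩ ⟨hx, ha⟩
    have h0 := hg a ha
    refine ⟨ha, ?_⟩
    rcases eq_or_lt_of_le h0 with h | h
    · exact Or.inr ⟨h.symm, hx⟩
    · exact Or.inl h
  apply Set.Subset.antisymm
  · rintro ⟨x, a⟩ ⟨ha, hca⟩
    rw [genCone, Set.mem_sInter]
    rintro Q' ⟨⟨h0', hadd', hconj'⟩, hsub'⟩
    rcases hca with h1 | ⟨h0, hx⟩
    · have h2le : (2:ℚ) ≤ 2 ^ (g a) := by
        calc (2:ℚ) = 2 ^ (1:ℤ) := by norm_num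
        _ ≤ 2 ^ (g a) := by
          apply zpow_le_zpow_right₀ (by norm_num) h1
      have hne : (1:ℚ) - 2 ^ (g a) ≠ 0 := by linarith
      set y := x / (1 - 2 ^ (g a)) with hy
      have hmem : ((0:ℚ), a) ∈ Q' := hsub' (by exact ⟨le_refl (0:ℚ), ha⟩)
      have hc := hconj' _ hmem (y, 0)
      have heq : sAdd ψ (sAdd ψ (y, 0) ((0:ℚ), a)) (sNeg ψ (y, 0)) = (x, a) := by
        simp only [sAdd, sNeg, neg_zero, hψact.1, hψ, zero_add, add_zero, Prod.mk.injEq]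
        refine ⟨?_, trivial⟩
        rw [hy]
        field_simp
        ring
      rwa [heq] at hc
    · have hm1 : ((x:ℚ), (0:A)) ∈ Q' := hsub' (by exact ⟨hx, hPA0⟩)
      have hm2 : ((0:ℚ), a) ∈ Q' := hsub' (by exact ⟨le_refl (0:ℚ), ha⟩)
      have hc := hadd' _ hm1 _ hm2
      have heq : sAdd ψ (x, (0:A)) ((0:ℚ), a) = (x, a) := by
        simp only [sAdd, map_zero, add_zero, zero_add]
      rwa [heq] at hc
  · intro p hp
    exact hp Q ⟨hQcone, hQsub⟩

end PreordGrp
end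

section
/- Let (X,P_X) be a preordered group, let Aut(X) be the group (under composition) of group automorphisms α of X such that both α and α⁻¹ are monotone (α(P_X) ⊆ P_X and α⁻¹(P_X) ⊆ P_X), and set P̃ = {α ∈ Aut(X) : α(x) ~ x for all x ∈ X}. Then: (1) P̃ is a positive cone on Aut(X), i.e. a submonoid closed under conjugation; (2) the product cone P_X × P̃ is a compatible positive cone on the semidirect product X ⋊ Aut(X) (action (α,x) ↦ α(x)), so this point is a rali; and (3) this rali point is terminal among rali points with kernel (X,P_X): for every action φ of B on X and preordered group (B,P_B) such that the product cone P_X × P_B is compatible on X ⋊_φ B, the map b ↦ φ_b is a well-defined monotone group homomorphism B → Aut(X) with φ_b ∈ P̃ for every b ∈ P_B, the map (x,b) ↦ (x, φ_b) is a monotone group homomorphism X ⋊_φ B → X ⋊ Aut(X) commuting with the kernels, projections and splittings, and it is the unique such morphism restricting to the identity on X. -/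
namespace PreordGrp

section Aut

variable {X : Type*} [AddGroup X]

/-- The group `Aut(X)` of monotone group automorphisms with monotone inverse,
as a subset of the additive automorphisms of `X`. -/
def AutMono (PX : Set X) : Set (X ≃+ X) :=
  {α | (∀ x ∈ PX, α x ∈ PX) ∧ ∀ x ∈ PX, α.symm x ∈ PX}

/-- A positive cone on `Aut(X)`: a submonoid (under composition) of `Aut(X)`
closed under conjugation by elements of `Aut(X)`. -/
def IsAutCone (PX : Set X) (P : Set (X ≃+ X)) : Prop :=
  P ⊆ AutMono PX ∧ AddEquiv.refl X ∈ P ∧ (∀ α ∈ P, ∀ β ∈ P, β.trans α ∈ P) ∧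
    ∀ α ∈ P, ∀ β ∈ AutMono PX, β.symm.trans (α.trans β) ∈ P

/-- An admissible cone on `Aut(X)`: `α ∈ P` and `α⁻¹ ∈ P` imply `α x ~ x` for all `x`. -/
def IsAdmissible (PX : Set X) (P : Set (X ≃+ X)) : Prop :=
  ∀ α ∈ P, α.symm ∈ P → ∀ x : X, coneSim PX (α x) x

/-- Addition in `X ⋊ Aut(X)` (evaluation action): `(x, α) + (x', α') = (x + α x', α ∘ α')`. -/
def aAdd (p q : X × (X ≃+ X)) : X × (X ≃+ X) := (p.1 + p.2 q.1, q.2.trans p.2)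

/-- Negation in `X ⋊ Aut(X)`. -/
def aNeg (p : X × (X ≃+ X)) : X × (X ≃+ X) := (-(p.2.symm p.1), p.2.symm)

/-- A positive cone on `X ⋊ Aut(X)`: contained in `X × Aut(X)`, contains the zero,
closed under addition and under conjugation by elements of `X ⋊ Aut(X)`. -/
def IsAutSCone (PX : Set X) (P : Set (X × (X ≃+ X))) : Prop :=
  (∀ p ∈ P, p.2 ∈ AutMono PX) ∧ ((0 : X), AddEquiv.refl X) ∈ P ∧
    (∀ p ∈ P, ∀ q ∈ P, aAdd p q ∈ P) ∧
    ∀ p ∈ P, ∀ g : X × (X ≃+ X), g.2 ∈ AutMono PX → aAdd (aAdd g p) (aNeg g) ∈ P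

/-- A compatible positive cone on `X ⋊ Aut(X)` relative to a cone `PA` on `Aut(X)`. -/
def IsAutCompatible (PX : Set X) (PA : Set (X ≃+ X)) (P : Set (X × (X ≃+ X))) : Prop :=
  IsAutSCone PX P ∧ (∀ (x : X) (α : X ≃+ X), (x, α) ∈ P → α ∈ PA) ∧
    (∀ x : X, (x, AddEquiv.refl X) ∈ P ↔ x ∈ PX) ∧ ∀ α ∈ PA, ((0 : X), α) ∈ P

/-- The lexicographic cone on `X ⋊ Aut(X)` relative to `PX` and a cone `PA` on `Aut(X)`. -/
def lexAutCone (PX : Set X) (PA : Set (X ≃+ X)) : Set (X × (X ≃+ X)) :=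
  {p | (p.2 ∈ PA ∧ p.2.symm ∉ PA) ∨ (p.2 ∈ PA ∧ p.2.symm ∈ PA ∧ p.1 ∈ PX)}

end Aut

/-- for a preordered group `(X, PX)`, the set
`P̃ = {α ∈ Aut(X) | α x ~ x for all x}` is a positive cone on `Aut(X)`, the
product cone `PX × P̃` is compatible on `X ⋊ Aut(X)` (so this point is a rali),
and this rali point is terminal among rali points with kernel `(X, PX)`. -/
theorem stmt14 {X : Type*} [AddGroup X] (PX : Set X) (hPX : IsCone PX)
    (Ptil : Set (X ≃+ X))
    (hPtil : Ptil = {α | α ∈ AutMono PX ∧ ∀ x : X, coneSim PX (α x) x}) :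
    IsAutCone PX Ptil ∧
    IsAutCompatible PX Ptil {r : X × (X ≃+ X) | r.1 ∈ PX ∧ r.2 ∈ Ptil} ∧
    ∀ (B : Type*) [inst : AddGroup B], ∀ (PB : Set B) (φ : B → X ≃+ X),
      IsCone PB → IsAction φ → IsCompatible φ PX PB (PX ×ˢ PB) →
      ((∀ b : B, φ b ∈ AutMono PX) ∧
       (∀ b ∈ PB, φ b ∈ Ptil) ∧
       (∀ b b' : B, φ (b + b') = (φ b').trans (φ b)) ∧
       (∀ p q : X × B,
         ((sAdd φ p q).1, φ (sAdd φ p q).2) = aAdd (p.1, φ p.2) (q.1, φ q.2)) ∧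
       (∀ p : X × B, p ∈ PX ×ˢ PB →
         ((p.1, φ p.2) : X × (X ≃+ X)) ∈
           {r : X × (X ≃+ X) | r.1 ∈ PX ∧ r.2 ∈ Ptil}) ∧
       (∀ x : X, ((x, φ (0 : B)) : X × (X ≃+ X)) = (x, AddEquiv.refl X)) ∧
       (∀ b : B, (((0 : X), φ b) : X × (X ≃+ X)) = ((0 : X), φ b)) ∧
       ∀ (G : X × B → X × (X ≃+ X)) (c : B → X ≃+ X),
         (∀ p q : X × B, G (sAdd φ p q) = aAdd (G p) (G q)) →
         (∀ p ∈ PX ×ˢ PB, G p ∈ {r : X × (X ≃+ X) | r.1 ∈ PX ∧ r.2 ∈ Ptil}) →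
         (∀ x : X, G (x, (0 : B)) = (x, AddEquiv.refl X)) →
         (∀ p : X × B, (G p).2 = c p.2) →
         (∀ b : B, G ((0 : X), b) = ((0 : X), c b)) →
         (∀ b ∈ PB, c b ∈ Ptil) →
         ∀ p : X × B, G p = (p.1, φ p.2)) := by
  subst hPtil
  obtain ⟨hP0, hPadd, hPconj⟩ := hPX
  -- basic lemmas on the preorder induced by PX
  have hle : ∀ a b c : X, coneLe PX a b → coneLe PX b c → coneLe PX a c := by
    intro a b c h1 h2
    have := hPadd _ h1 _ h2
    simpa [coneLe, add_assoc] using this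
  have hsimtrans : ∀ a b c : X, coneSim PX a b → coneSim PX b c → coneSim PX a c :=
    fun a b c h1 h2 => ⟨hle _ _ _ h1.1 h2.1, hle _ _ _ h2.2 h1.2⟩
  have hsimrefl : ∀ a : X, coneSim PX a a := by
    intro a; constructor <;> simp [coneLe, hP0]
  have hmonoSim : ∀ β ∈ AutMono PX, ∀ a b : X, coneSim PX a b → coneSim PX (β a) (β b) := by
    intro β hβ a b h
    constructor
    · have := hβ.1 _ h.1
      simpa [coneLe, map_add, map_neg] using this
    · have := hβ.1 _ h.2
      simpa [coneLe, map_add, map_neg] using this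
  -- key computation: a + u - w ∈ PX whenever u ∈ PX and -w + a ∈ PX
  have hconjkey : ∀ a u w : X, u ∈ PX → -w + a ∈ PX → a + u + -w ∈ PX := by
    intro a u w hu hs
    have := hPconj _ (hPadd _ hu _ hs) a
    have e : a + (u + (-w + a)) - a = a + u + -w := by
      simp [sub_eq_add_neg, add_assoc]
    rwa [e] at this
  set Pt : Set (X ≃+ X) := {α | α ∈ AutMono PX ∧ ∀ x : X, coneSim PX (α x) x} with hPt
  have hrefl : AddEquiv.refl X ∈ Pt := by
    refine ⟨⟨fun x hx => ?_, fun x hx => ?_⟩, fun x => ?_⟩ <;> simpa using (by first | exact hx | exact hsimrefl x)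
  have htransmem : ∀ α ∈ Pt, ∀ β ∈ Pt, β.trans α ∈ Pt := by
    intro α hα β hβ
    refine ⟨⟨fun x hx => ?_, fun x hx => ?_⟩, fun x => ?_⟩
    · simpa using hα.1.1 _ (hβ.1.1 _ hx)
    · simpa using hβ.1.2 _ (hα.1.2 _ hx)
    · have h1 : coneSim PX (α (β x)) (β x) := hα.2 (β x)
      have h2 : coneSim PX (β x) x := hβ.2 x
      simpa using hsimtrans _ _ _ h1 h2
  have hconjmem : ∀ α ∈ Pt, ∀ β ∈ AutMono PX, β.symm.trans (α.trans β) ∈ Pt := by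
    intro α hα β hβ
    refine ⟨⟨fun x hx => ?_, fun x hx => ?_⟩, fun x => ?_⟩
    · simpa using hβ.1 _ (hα.1.1 _ (hβ.2 _ hx))
    · simpa using hβ.1 _ (hα.1.2 _ (hβ.2 _ hx))
    · have h1 : coneSim PX (α (β.symm x)) (β.symm x) := hα.2 (β.symm x)
      have h2 := hmonoSim β hβ _ _ h1
      rw [β.apply_symm_apply] at h2
      simpa using h2
  have hcone : IsAutCone PX Pt := ⟨fun α hα => hα.1, hrefl, htransmem, hconjmem⟩
  refine ⟨hcone, ?_, ?_⟩
  · -- compatibility of the product cone on X ⋊ Aut(X)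
    refine ⟨⟨fun p hp => hp.2.1, ⟨hP0, hrefl⟩, ?_, ?_⟩, fun x α h => h.2,
      fun x => ⟨fun h => h.1, fun h => ⟨h, hrefl⟩⟩, fun α hα => ⟨hP0, hα⟩⟩
    · intro p hp q hq
      exact ⟨hPadd _ hp.1 _ (hp.2.1.1 _ hq.1), htransmem _ hp.2 _ hq.2⟩
    · intro p hp g hg
      constructor
      · show (aAdd g p).1 + (aAdd g p).2 (aNeg g).1 ∈ PX
        have hs : -(g.2 (p.2 (g.2.symm g.1))) + g.1 ∈ PX := by
          have h1 : coneLe PX (p.2 (g.2.symm g.1)) (g.2.symm g.1) := (hp.2.2 (g.2.symm g.1)).1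
          have := hg.1 _ h1
          simpa [coneLe, map_add, map_neg, g.2.apply_symm_apply] using this
        have := hconjkey g.1 (g.2 p.1) (g.2 (p.2 (g.2.symm g.1))) (hg.1 _ hp.1) hs
        simpa [aAdd, aNeg, map_add, map_neg, add_assoc] using this
      · exact hconjmem _ hp.2 _ hg
  · -- terminality
    intro B instB PB φ hPB hact hcomp
    have hφ0 : ∀ x : X, φ 0 x = x := hact.1
    have hφadd := hact.2
    obtain ⟨⟨hS0, hSadd, hSconj⟩, hproj, hker, hsplit⟩ := hcomp
    -- φ b is monotone
    have hmono : ∀ b : B, ∀ x ∈ PX, φ b x ∈ PX := by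
      intro b x hx
      have h := hSconj (x, 0) (by exact ⟨hx, hPB.1⟩) (0, b)
      simp only [sAdd, sNeg, map_zero, neg_zero, add_zero, zero_add, hφ0,
        add_neg_cancel] at h
      exact h.1
    have hsymmeq : ∀ (b : B) (x : X), (φ b).symm x = φ (-b) x := by
      intro b x
      rw [AddEquiv.symm_apply_eq]
      rw [← hφadd, add_neg_cancel, hφ0]
    have hAut : ∀ b : B, φ b ∈ AutMono PX := by
      intro b
      refine ⟨hmono b, fun x hx => ?_⟩
      rw [hsymmeq]; exact hmono (-b) x hx
    -- φ b ∈ Pt for b ∈ PB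
    have hPtmem : ∀ b ∈ PB, φ b ∈ Pt := by
      intro b hb
      refine ⟨hAut b, fun x => ?_⟩
      have h2 : -x + φ b x ∈ PX := by
        have h := hSconj (0, b) ⟨hP0, hb⟩ (-x, 0)
        simp only [sAdd, sNeg, map_zero, neg_zero, add_zero, zero_add, hφ0,
          neg_neg, add_neg_cancel] at h
        exact h.1
      have h1 : -(φ b x) + x ∈ PX := by
        have h : x + -(φ b x) ∈ PX := by
          have h := hSconj (0, b) ⟨hP0, hb⟩ (x, 0)
          simp only [sAdd, sNeg, map_zero, neg_zero, add_zero, zero_add, hφ0,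
            map_neg, add_neg_cancel] at h
          exact h.1
        have := hPconj _ h (-(φ b x))
        simpa [sub_eq_add_neg, add_assoc, neg_neg] using this
      exact ⟨h1, h2⟩
    have hφtrans : ∀ b b' : B, φ (b + b') = (φ b').trans (φ b) := by
      intro b b'
      ext x
      simpa using hφadd b b' x
    have hφzero : φ (0 : B) = AddEquiv.refl X := by
      ext x; simpa using hφ0 x
    refine ⟨hAut, hPtmem, hφtrans, ?_, fun p hp => ⟨hp.1, hPtmem _ hp.2⟩, ?_,
      fun b => rfl, ?_⟩
    · intro p q
      simp [sAdd, aAdd, hφtrans]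
    · intro x
      rw [hφzero]
    · -- uniqueness
      intro G c hGhom hGmono hGker hGc hGsplit hcP
      have hcb : ∀ b : B, c b = φ b := by
        intro b
        ext x
        have e1 : sAdd φ (sAdd φ ((0 : X), b) (x, (0 : B))) (sNeg φ ((0 : X), b))
            = (φ b x, (0 : B)) := by
          simp [sAdd, sNeg]
        have e2 : sNeg φ ((0 : X), b) = ((0 : X), -b) := by
          simp [sNeg]
        have h1 : G (φ b x, (0 : B))
            = aAdd (aAdd (G ((0 : X), b)) (G (x, (0 : B)))) (G ((0 : X), -b)) := by
          rw [← e1, hGhom, hGhom, e2]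
        rw [hGker, hGsplit, hGsplit, hGker] at h1
        have := congrArg Prod.fst h1
        simpa [aAdd] using this.symm
      intro p
      obtain ⟨x, b⟩ := p
      have hx : ((x, b) : X × B) = sAdd φ (x, 0) (0, b) := by simp [sAdd]
      rw [show (G (x, b) = ((x, b).1, φ (x, b).2)) = (G (x, b) = (x, φ b)) from rfl,
        hx, hGhom, hGker, hGsplit, hcb]
      simp only [aAdd, map_zero, add_zero, Prod.mk.injEq, true_and]
      ext y
      rfl

end PreordGrp
end

section
/- Let (X,P_X) be a preordered group, let Aut(X) be the group of group automorphisms α of X with α and α⁻¹ monotone, and let P be an admissible positive cone on Aut(X), i.e. a submonoid closed under conjugation such that whenever α ∈ P and α⁻¹ ∈ P one has α(x) ~ x for all x ∈ X. Then: (1) the lexicographic cone on X ⋊ Aut(X) (with respect to P_X and P, for the evaluation action) is compatible; and (2) for every preordered group (B,P_B), action φ of B on X, and compatible cone Q on X ⋊_φ B such that (a) φ_b ∈ P for every b ∈ P_B, and (b) whenever (x,b) ∈ Q with φ_b ∈ P and φ_b⁻¹ ∈ P one has x ∈ P_X, the map b ↦ φ_b is a monotone group homomorphism B → Aut(X) (mapping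 P_B into P) and (x,b) ↦ (x, φ_b) is a monotone group homomorphism from (X ⋊_φ B, Q) to X ⋊ Aut(X) with the lexicographic cone, commuting with the kernels, projections and splittings; it is the unique such morphism restricting to the identity on X. -/
namespace PreordGrp

/-- for an admissible positive cone `P` on `Aut(X)`, the
lexicographic cone on `X ⋊ Aut(X)` is compatible, and the resulting maximal
point classifies the split extensions with kernel `(X, PX)` satisfying
conditions (a) and (b). -/
theorem stmt15 {X : Type*} [AddGroup X] (PX : Set X) (hPX : IsCone PX)
    (P : Set (X ≃+ X)) (hP : IsAutCone PX P) (hadm : IsAdmissible PX P) :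
    IsAutCompatible PX P (lexAutCone PX P) ∧
    ∀ (B : Type*) [inst : AddGroup B],
      ∀ (PB : Set B) (φ : B → X ≃+ X) (Q : Set (X × B)),
      IsCone PB → IsAction φ → IsCompatible φ PX PB Q →
      (∀ b ∈ PB, φ b ∈ P) →
      (∀ (x : X) (b : B), (x, b) ∈ Q → φ b ∈ P → (φ b).symm ∈ P → x ∈ PX) →
      ((∀ b : B, φ b ∈ AutMono PX) ∧
       (∀ b ∈ PB, φ b ∈ P) ∧
       (∀ b b' : B, φ (b + b') = (φ b').trans (φ b)) ∧
       (∀ p q : X × B,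
         ((sAdd φ p q).1, φ (sAdd φ p q).2) = aAdd (p.1, φ p.2) (q.1, φ q.2)) ∧
       (∀ p ∈ Q, ((p.1, φ p.2) : X × (X ≃+ X)) ∈ lexAutCone PX P) ∧
       (∀ x : X, ((x, φ (0 : B)) : X × (X ≃+ X)) = (x, AddEquiv.refl X)) ∧
       ∀ (G : X × B → X × (X ≃+ X)) (c : B → X ≃+ X),
         (∀ p q : X × B, G (sAdd φ p q) = aAdd (G p) (G q)) →
         (∀ p ∈ Q, G p ∈ lexAutCone PX P) →
         (∀ x : X, G (x, (0 : B)) = (x, AddEquiv.refl X)) →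
         (∀ p : X × B, (G p).2 = c p.2) →
         (∀ b : B, G ((0 : X), b) = ((0 : X), c b)) →
         (∀ b ∈ PB, c b ∈ P) →
         ∀ p : X × B, G p = (p.1, φ p.2)) := by
  obtain ⟨hPX0, hPXadd, hPXconj⟩ := hPX
  obtain ⟨hPmono, hPid, hPcomp, hPconj⟩ := hP
  have hAMsymm : ∀ α ∈ AutMono PX, α.symm ∈ AutMono (X := X) PX := by
    rintro α ⟨h1, h2⟩
    exact ⟨h2, by simpa using h1⟩
  have hsplit : ∀ α ∈ P, ∀ β ∈ P, (β.trans α).symm ∈ P → α.symm ∈ P ∧ β.symm ∈ P := by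
    intro α hα β hβ hγ
    constructor
    · have h := hPcomp β hβ _ hγ
      have he : (β.trans α).symm.trans β = α.symm := by ext x; simp
      rwa [he] at h
    · have h := hPcomp _ hγ α hα
      have he : α.trans (β.trans α).symm = β.symm := by ext x; simp
      rwa [he] at h
  have hconjsym : ∀ α ∈ P, ∀ β ∈ AutMono PX,
      (β.symm.trans (α.trans β)).symm ∈ P → α.symm ∈ P := by
    intro α hα β hβ h
    have h2 := hPconj _ h β.symm (hAMsymm β hβ)
    have he : (β.symm).symm.trans (((β.symm.trans (α.trans β)).symm).trans β.symm)
        = α.symm := by ext x; simp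
    rwa [he] at h2
  constructor
  · refine ⟨⟨?_, ?_, ?_, ?_⟩, ?_, ?_, ?_⟩
    · rintro p (⟨h, _⟩ | ⟨h, _, _⟩) <;> exact hPmono h
    · exact Or.inr ⟨hPid, by simpa using hPid, hPX0⟩
    · rintro p hp q hq
      have hpP : p.2 ∈ P := by rcases hp with ⟨h, _⟩ | ⟨h, _⟩ <;> exact h
      have hqP : q.2 ∈ P := by rcases hq with ⟨h, _⟩ | ⟨h, _⟩ <;> exact h
      have hcomp : (aAdd p q).2 ∈ P := hPcomp p.2 hpP q.2 hqP
      by_cases hs : (q.2.trans p.2).symm ∈ P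
      · obtain ⟨hps, hqs⟩ := hsplit p.2 hpP q.2 hqP hs
        have hpx : p.1 ∈ PX := by
          rcases hp with ⟨_, h⟩ | ⟨_, _, h⟩
          · exact absurd hps h
          · exact h
        have hqx : q.1 ∈ PX := by
          rcases hq with ⟨_, h⟩ | ⟨_, _, h⟩
          · exact absurd hqs h
          · exact h
        exact Or.inr ⟨hcomp, hs, hPXadd p.1 hpx _ ((hPmono hpP).1 q.1 hqx)⟩
      · exact Or.inl ⟨hcomp, hs⟩
    · rintro p hp g hg
      have hpP : p.2 ∈ P := by rcases hp with ⟨h, _⟩ | ⟨h, _⟩ <;> exact h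
      have hδ : (aAdd (aAdd g p) (aNeg g)).2 ∈ P := hPconj p.2 hpP g.2 hg
      by_cases hδs : (aAdd (aAdd g p) (aNeg g)).2.symm ∈ P
      · refine Or.inr ⟨hδ, hδs, ?_⟩
        have hps : p.2.symm ∈ P := hconjsym p.2 hpP g.2 hg hδs
        have hpx : p.1 ∈ PX := by
          rcases hp with ⟨_, h⟩ | ⟨_, _, h⟩
          · exact absurd hps h
          · exact h
        have h1 : g.1 + g.2 p.1 - g.1 ∈ PX := hPXconj _ (hg.1 p.1 hpx) g.1
        have hadm' := hadm _ hδ hδs g.1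
        have h2 : g.1 - (aAdd (aAdd g p) (aNeg g)).2 g.1 ∈ PX := by
          have h3 := hPXconj _ hadm'.1 g.1
          simpa [sub_eq_add_neg, add_assoc] using h3
        have h4 := hPXadd _ h1 _ h2
        have he : (g.1 + g.2 p.1 - g.1) + (g.1 - (aAdd (aAdd g p) (aNeg g)).2 g.1)
            = (aAdd (aAdd g p) (aNeg g)).1 := by
          simp [aAdd, aNeg, sub_eq_add_neg, add_assoc]
        rwa [he] at h4
      · exact Or.inl ⟨hδ, hδs⟩
    · rintro x α (⟨h, _⟩ | ⟨h, _⟩) <;> exact h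
    · intro x
      constructor
      · rintro (⟨_, h⟩ | ⟨_, _, h⟩)
        · exact absurd (by simpa using hPid) h
        · exact h
      · intro hx
        exact Or.inr ⟨hPid, by simpa using hPid, hx⟩
    · intro α hα
      by_cases h : α.symm ∈ P
      · exact Or.inr ⟨hα, h, hPX0⟩
      · exact Or.inl ⟨hα, h⟩
  · intro B _ PB φ Q hPB hact hQ hφP hb
    obtain ⟨⟨hQ00, hQadd, hQconj⟩, hQb, hQ0, hQB⟩ := hQ
    have hsymm_eq : ∀ (b : B) (x : X), (φ b).symm x = φ (-b) x := by
      intro b x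
      have h1 : φ b (φ (-b) x) = x := by
        rw [← hact.2]; simp [hact.1]
      calc (φ b).symm x = (φ b).symm (φ b (φ (-b) x)) := by rw [h1]
        _ = φ (-b) x := (φ b).symm_apply_apply _
    have hmono : ∀ b : B, ∀ x ∈ PX, φ b x ∈ PX := by
      intro b x hx
      have h0 : ((x, (0 : B)) : X × B) ∈ Q := (hQ0 x).2 hx
      have h1 := hQconj _ h0 ((0 : X), b)
      simp [sAdd, sNeg] at h1
      exact (hQ0 _).1 h1
    have hAM : ∀ b : B, φ b ∈ AutMono PX := fun b =>
      ⟨hmono b, fun x hx => by rw [hsymm_eq]; exact hmono (-b) x hx⟩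
    have hhom : ∀ b b' : B, φ (b + b') = (φ b').trans (φ b) :=
      fun b b' => AddEquiv.ext fun x => by simp [AddEquiv.trans_apply, hact.2]
    have hφ0 : φ 0 = AddEquiv.refl X := AddEquiv.ext fun x => hact.1 x
    refine ⟨hAM, hφP, hhom, ?_, ?_, ?_, ?_⟩
    · intro p q
      simp [sAdd, aAdd, hhom]
    · rintro ⟨x, b⟩ hp
      have hbPB := hQb x b hp
      have hφb := hφP b hbPB
      by_cases hs : (φ b).symm ∈ P
      · exact Or.inr ⟨hφb, hs, hb x b hp hφb hs⟩
      · exact Or.inl ⟨hφb, hs⟩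
    · intro x; rw [hφ0]
    · intro G c hGadd hGQ hGX hGc hG0 hcP p
      have key : ∀ (y : X) (b' : B), G (y, b') = (y, c b') := by
        intro y b'
        have h1 : sAdd φ (y, (0 : B)) ((0 : X), b') = (y, b') := by simp [sAdd]
        have h2 := hGadd (y, 0) (0, b')
        rw [h1, hGX y, hG0 b'] at h2
        rw [h2]
        simp only [aAdd]
        exact Prod.ext (by simp) (AddEquiv.ext fun z => rfl)
      obtain ⟨x, b⟩ := p
      have hceq : c b = φ b := by
        apply AddEquiv.ext; intro y
        have h1 : sAdd φ ((0 : X), b) (y, (0 : B)) = (φ b y, b) := by simp [sAdd]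
        have h2 := hGadd (0, b) (y, 0)
        rw [h1, key (φ b y) b, hG0 b, hGX y] at h2
        have h3 := congrArg Prod.fst h2
        simpa [aAdd] using h3.symm
      rw [key x b, hceq]

end PreordGrp
end

section
/- Let (X,P_X) be a preordered group in which every element is positive or negative (for every x ∈ X, x ∈ P_X or -x ∈ P_X), and let Aut(X) be the group of group automorphisms α of X with α and α⁻¹ monotone. Define P⁺ = {α ∈ Aut(X) : α(x) ≥ x for all x ∈ P_X} and P⁻ = {α ∈ Aut(X) : α(x) ≥ x for all x with -x ∈ P_X}. Then P⁺ and P⁻ are positive cones on Aut(X) (submonoids closed under conjugation), both are admissible (if α and α⁻¹ both belong to the cone, then α(x) ~ x for all x ∈ X), and α ∈ P⁺ if and only if α⁻¹ ∈ P⁻. -/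
namespace PreordGrp

/-!
`P⁺` and `P⁻` are the monotone automorphisms raising every element of `S`, for `S = P_X` and
`S = -P_X`, both stable under `Aut(X)`. Transitivity and monotonicity make such a set a cone.
If `α` and `α⁻¹` both raise `S`, then `α x ~ x` on `S`, hence on `-S` after negating, and
totality says `S ∪ -S = X`. Applying `α⁻¹` and negating turns `x ≤ α x` into
`-x ≤ α⁻¹ (-x)`, which is the duality between `P⁺` and `P⁻`.
-/

section Raising

variable {G : Type*} [AddGroup G] {P : Set G} {x y : G}

theorem IsCone.coneLe_refl (hP : IsCone P) (x : G) : coneLe P x x := by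
  simpa [coneLe] using hP.1

theorem IsCone.coneLe_trans {z : G} (hP : IsCone P) (hxy : coneLe P x y) (hyz : coneLe P y z) :
    coneLe P x z := by
  simpa [coneLe, add_assoc] using hP.2.1 _ hxy _ hyz

theorem IsCone.coneLe_neg_neg_iff (hP : IsCone P) : coneLe P (-y) (-x) ↔ coneLe P x y := by
  unfold coneLe
  rw [neg_neg]
  constructor
  · intro h
    simpa [sub_eq_add_neg, add_assoc] using hP.2.2 _ h (-x)
  · intro h
    simpa [sub_eq_add_neg, add_assoc] using hP.2.2 _ h y

theorem IsCone.coneSim_neg_neg_iff (hP : IsCone P) : coneSim P (-x) (-y) ↔ coneSim P x y := by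
  rw [coneSim, coneSim, hP.coneLe_neg_neg_iff, hP.coneLe_neg_neg_iff, and_comm]

variable {X : Type*} [AddGroup X] {PX S : Set X} {α β : X ≃+ X} {x : X}

theorem symm_mem_autMono (hα : α ∈ AutMono PX) : α.symm ∈ AutMono PX :=
  ⟨hα.2, hα.1⟩

theorem trans_mem_autMono (hα : α ∈ AutMono PX) (hβ : β ∈ AutMono PX) :
    α.trans β ∈ AutMono PX :=
  ⟨fun x hx => hβ.1 _ (hα.1 x hx), fun x hx => hα.2 _ (hβ.2 x hx)⟩

theorem coneLe_map_iff (hα : α ∈ AutMono PX) {x y : X} :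
    coneLe PX (α x) (α y) ↔ coneLe PX x y := by
  unfold coneLe
  rw [← map_neg, ← map_add]
  exact ⟨fun h => by simpa using hα.2 _ h, hα.1 _⟩

theorem IsCone.coneLe_symm_apply_neg_iff (hPX : IsCone PX) (hα : α ∈ AutMono PX) :
    coneLe PX (-x) (α.symm (-x)) ↔ coneLe PX x (α x) :=
  calc coneLe PX (-x) (α.symm (-x)) ↔ coneLe PX (-x) (-α.symm x) := by rw [map_neg]
    _ ↔ coneLe PX (α.symm x) x := hPX.coneLe_neg_neg_iff
    _ ↔ coneLe PX x (α x) := by rw [← coneLe_map_iff hα, AddEquiv.apply_symm_apply]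

/-- `P⁺ = raisingAut PX PX` and `P⁻ = raisingAut PX (-PX)`. -/
def raisingAut (PX S : Set X) : Set (X ≃+ X) :=
  {α | α ∈ AutMono PX ∧ ∀ x ∈ S, coneLe PX x (α x)}

theorem isAutCone_raisingAut (hPX : IsCone PX) (hS : ∀ α ∈ AutMono PX, ∀ x ∈ S, α x ∈ S) :
    IsAutCone PX (raisingAut PX S) := by
  refine ⟨fun α hα => hα.1, ⟨⟨fun x hx => hx, fun x hx => hx⟩, fun x _ => hPX.coneLe_refl x⟩,
    ?_, ?_⟩
  · rintro α ⟨hα, hαS⟩ β ⟨hβ, hβS⟩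
    exact ⟨trans_mem_autMono hβ hα, fun x hx =>
      hPX.coneLe_trans (hβS x hx) (hαS (β x) (hS β hβ x hx))⟩
  · rintro α ⟨hα, hαS⟩ β hβ
    refine ⟨trans_mem_autMono (symm_mem_autMono hβ) (trans_mem_autMono hα hβ), fun x hx => ?_⟩
    have h := (coneLe_map_iff hβ).2 (hαS _ (hS _ (symm_mem_autMono hβ) x hx))
    rwa [AddEquiv.apply_symm_apply] at h

theorem coneSim_apply_of_mem_raisingAut (hS : ∀ α ∈ AutMono PX, ∀ x ∈ S, α x ∈ S)
    (hα : α ∈ raisingAut PX S) (hα' : α.symm ∈ raisingAut PX S) (hx : x ∈ S) :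
    coneSim PX (α x) x := by
  refine ⟨?_, hα.2 x hx⟩
  simpa using hα'.2 (α x) (hS α hα.1 x hx)

theorem isAdmissible_raisingAut (hPX : IsCone PX) (hS : ∀ α ∈ AutMono PX, ∀ x ∈ S, α x ∈ S)
    (htot : ∀ x, x ∈ S ∨ -x ∈ S) : IsAdmissible PX (raisingAut PX S) := by
  intro α hα hα' x
  rcases htot x with hx | hx
  · exact coneSim_apply_of_mem_raisingAut hS hα hα' hx
  · have h := coneSim_apply_of_mem_raisingAut hS hα hα' hx
    rwa [map_neg, hPX.coneSim_neg_neg_iff] at h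

theorem IsCone.symm_mem_raisingAut_neg_iff (hPX : IsCone PX) (hα : α ∈ AutMono PX) :
    α.symm ∈ raisingAut PX (-S) ↔ α ∈ raisingAut PX S := by
  simp only [raisingAut, Set.mem_ofPred_eq, symm_mem_autMono hα, hα, true_and]
  constructor
  · intro h x hx
    exact (hPX.coneLe_symm_apply_neg_iff hα).1 (h (-x) (by simpa using hx))
  · intro h x hx
    simpa using (hPX.coneLe_symm_apply_neg_iff hα (x := -x)).2 (h (-x) hx)

end Raising

/-- for a preordered group `(X, PX)` in which every element is
positive or negative, the sets `P⁺ = {α | α x ≥ x for all positive x}` and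
`P⁻ = {α | α x ≥ x for all negative x}` are positive cones on `Aut(X)`, both
admissible, and `α ∈ P⁺ ↔ α⁻¹ ∈ P⁻`. -/
theorem stmt16 {X : Type*} [AddGroup X] (PX : Set X) (hPX : IsCone PX)
    (htot : ∀ x : X, x ∈ PX ∨ -x ∈ PX)
    (Pp Pm : Set (X ≃+ X))
    (hPp : Pp = {α | α ∈ AutMono PX ∧ ∀ x ∈ PX, coneLe PX x (α x)})
    (hPm : Pm = {α | α ∈ AutMono PX ∧ ∀ x : X, -x ∈ PX → coneLe PX x (α x)}) :
    IsAutCone PX Pp ∧ IsAutCone PX Pm ∧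
    IsAdmissible PX Pp ∧ IsAdmissible PX Pm ∧
    ∀ α ∈ AutMono PX, (α ∈ Pp ↔ α.symm ∈ Pm) := by
  have hPos : ∀ α ∈ AutMono PX, ∀ x ∈ PX, α x ∈ PX := fun α hα => hα.1
  have hNeg : ∀ α ∈ AutMono PX, ∀ x ∈ -PX, α x ∈ -PX := fun α hα x hx => by
    simpa using hα.1 _ hx
  have hPm' : Pm = raisingAut PX (-PX) := hPm
  subst hPp hPm'
  refine ⟨isAutCone_raisingAut hPX hPos, isAutCone_raisingAut hPX hNeg,
    isAdmissible_raisingAut hPX hPos htot, isAdmissible_raisingAut hPX hNeg fun x => ?_,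
    fun α hα => (hPX.symm_mem_raisingAut_neg_iff hα).symm⟩
  simpa [or_comm] using htot x

end PreordGrp
end

section
/- Consider ℚ with its usual order, and let Aut(ℚ) be the group of additive group automorphisms of ℚ that are monotone with monotone inverse. Set P⁺ = {α ∈ Aut(ℚ) : α(x) ≥ x for all x ≥ 0} and P⁻ = {α ∈ Aut(ℚ) : α(x) ≥ x for all x ≤ 0}. Then there is no positive cone P on Aut(ℚ) (submonoid closed under conjugation) containing P⁺ ∪ P⁻ which is admissible, i.e. which satisfies: α ∈ P and α⁻¹ ∈ P imply α(x) = x for all x ∈ ℚ. (Indeed the automorphism α(x) = 2x lies in P⁺, its inverse lies in P⁻, yet α ≠ id.) Consequently the category of preordered groups has no split extension classifier with kernel ℚ. -/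
namespace PreordGrp

/-- The doubling automorphism of `ℚ`. -/
def dbl : ℚ ≃+ ℚ where
  toFun x := 2 * x
  invFun x := x / 2
  left_inv x := by ring
  right_inv x := by ring
  map_add' x y := by ring

lemma dbl_symm_apply (y : ℚ) : dbl.symm y = y / 2 := rfl

lemma main_aux (Pp Pm : Set (ℚ ≃+ ℚ))
    (hPp : Pp = {α | α ∈ AutMono {x : ℚ | 0 ≤ x} ∧ ∀ x : ℚ, 0 ≤ x → x ≤ α x})
    (hPm : Pm = {α | α ∈ AutMono {x : ℚ | 0 ≤ x} ∧ ∀ x : ℚ, x ≤ 0 → x ≤ α x}) :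
    ∀ α : ℚ ≃+ ℚ, (∀ x : ℚ, α x = 2 * x) →
      α ∈ Pp ∧ α.symm ∈ Pm ∧ α ≠ AddEquiv.refl ℚ := by
  intro α hα
  have hsymm : ∀ y : ℚ, α.symm y = y / 2 := by
    intro y
    have : α (y / 2) = y := by rw [hα]; ring
    calc α.symm y = α.symm (α (y/2)) := by rw [this]
    _ = y / 2 := α.symm_apply_apply _
  refine ⟨?_, ?_, ?_⟩
  · rw [hPp]
    refine ⟨⟨fun x hx => ?_, fun x hx => ?_⟩, fun x hx => ?_⟩
    · simp only [Set.mem_setOf_eq] at hx ⊢; rw [hα]; linarith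
    · simp only [Set.mem_setOf_eq] at hx ⊢; rw [hsymm]; linarith
    · rw [hα]; linarith
  · rw [hPm]
    refine ⟨⟨fun x hx => ?_, fun x hx => ?_⟩, fun x hx => ?_⟩
    · simp only [Set.mem_setOf_eq] at hx ⊢; rw [hsymm]; linarith
    · simp only [Set.mem_setOf_eq, AddEquiv.symm_symm] at hx ⊢; rw [hα]; linarith
    · rw [hsymm]; linarith
  · intro h
    have h1 : α 1 = 1 := by rw [h]; rfl
    rw [hα] at h1; norm_num at h1

/-- for `ℚ` with its usual order there is no admissible positive
cone on `Aut(ℚ)` containing `P⁺ ∪ P⁻`; indeed the doubling automorphism lies in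
`P⁺`, its inverse lies in `P⁻`, yet it is not the identity. Consequently the
category of preordered groups has no split extension classifier with kernel `ℚ`. -/
theorem stmt17 (Pp Pm : Set (ℚ ≃+ ℚ))
    (hPp : Pp = {α | α ∈ AutMono {x : ℚ | 0 ≤ x} ∧ ∀ x : ℚ, 0 ≤ x → x ≤ α x})
    (hPm : Pm = {α | α ∈ AutMono {x : ℚ | 0 ≤ x} ∧ ∀ x : ℚ, x ≤ 0 → x ≤ α x}) :
    (∀ α : ℚ ≃+ ℚ, (∀ x : ℚ, α x = 2 * x) →
      α ∈ Pp ∧ α.symm ∈ Pm ∧ α ≠ AddEquiv.refl ℚ) ∧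
    ¬ ∃ P : Set (ℚ ≃+ ℚ), IsAutCone {x : ℚ | 0 ≤ x} P ∧ Pp ∪ Pm ⊆ P ∧
        ∀ α ∈ P, α.symm ∈ P → ∀ x : ℚ, α x = x := by
  constructor
  · exact main_aux Pp Pm hPp hPm
  · rintro ⟨P, _, hsub, hadm⟩
    obtain ⟨hp, hm, hne⟩ := main_aux Pp Pm hPp hPm dbl (fun x => rfl)
    have h1 : dbl (1 : ℚ) = 1 :=
      hadm dbl (hsub (Or.inl hp)) (hsub (Or.inr hm)) 1
    simp [dbl] at h1


end PreordGrp
end
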